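/- arXiv:2203.02316 — 11 statements merged into one kernel-verified Lean document; each statement's English description precedes it below -/
import Mathlib

section
/- The Hamming graph of infinite breadth is Noetherian: the graph on the space of functions from ℕ to ℕ connecting two functions iff they differ in exactly one coordinate contains no vertex-induced subgraph isomorphic to any variation of the half graph or the three-quarter graph. -/
/-- A variation (with column parameters `b₀`, `b₁`) of a bipartite-type graph on `ω × 2`
with cross edges given by `cross`, embedded as a vertex-induced subgraph of `Γ`. -/
def VariationEmbedding {X : Type*} (Γ : X → X → Prop) (cross : ℕ → ℕ → Prop) : Prop :=
  ∃ (x y : ℕ → X) (b₀ b₁ : Bool),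
    Function.Injective x ∧ Function.Injective y ∧ (∀ n m, x n ≠ y m) ∧
    (∀ n m, n ≠ m → (Γ (x n) (x m) ↔ b₀ = true)) ∧
    (∀ n m, n ≠ m → (Γ (y n) (y m) ↔ b₁ = true)) ∧
    (∀ n m, Γ (x n) (y m) ↔ cross n m)

/-- A graph is Noetherian if it contains no variation of the half graph
(cross edges `m < n`) nor of the three-quarter graph (cross edges `m ≠ n`)
as a vertex-induced subgraph. -/
def GraphNoetherian {X : Type*} (Γ : X → X → Prop) : Prop :=
  ¬ VariationEmbedding Γ (fun n m => m < n) ∧ ¬ VariationEmbedding Γ (fun n m => m ≠ n)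

/-- The infinite breadth Hamming graph on `ℕ → ℕ`: two functions are connected
iff they differ in exactly one coordinate. -/
def HammingGraph (x y : ℕ → ℕ) : Prop := ∃! n, x n ≠ y n

/-- `a` and `b` agree at every coordinate other than `i`. -/
def AgreesOff (a b : ℕ → ℕ) (i : ℕ) : Prop := ∀ j, j ≠ i → a j = b j

lemma agreesOff_symm {a b : ℕ → ℕ} {i : ℕ} (h : AgreesOff a b i) : AgreesOff b a i :=
  fun j hj => (h j hj).symm

lemma ham_iff {a b : ℕ → ℕ} :
    HammingGraph a b ↔ ∃ i, a i ≠ b i ∧ AgreesOff a b i := by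
  constructor
  · rintro ⟨n, hn, hu⟩
    exact ⟨n, hn, fun j hj => by_contra fun h => hj (hu j h)⟩
  · rintro ⟨i, hi, ha⟩
    exact ⟨i, hi, fun m hm => by_contra fun h => hm (ha m h)⟩

lemma ham_symm {a b : ℕ → ℕ} (h : HammingGraph a b) : HammingGraph b a := by
  rw [ham_iff] at h ⊢
  obtain ⟨i, hi, ha⟩ := h
  exact ⟨i, fun h' => hi h'.symm, agreesOff_symm ha⟩

lemma ham_of_agreesOff {a b : ℕ → ℕ} {i : ℕ} (h : AgreesOff a b i) (hne : a ≠ b) :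
    HammingGraph a b := by
  rw [ham_iff]
  refine ⟨i, fun hi => hne (funext fun j => ?_), h⟩
  by_cases hj : j = i
  · rwa [hj]
  · exact h j hj

lemma not_ham {a b : ℕ → ℕ} {i j : ℕ} (h1 : a i ≠ b i) (h2 : a j ≠ b j) (hij : i ≠ j) :
    ¬ HammingGraph a b := by
  rintro ⟨n, _, hu⟩
  exact hij ((hu i h1).trans (hu j h2).symm)

/-- A common neighbour of two vertices of a triangle is adjacent to the third
vertex as well (unless equal to it): triangles in the Hamming graph lie on a line. -/
lemma clique_absorb {a b c y : ℕ → ℕ}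
    (hab : HammingGraph a b) (hac : HammingGraph a c) (hbc : HammingGraph b c)
    (hya : HammingGraph y a) (hyb : HammingGraph y b) (hne : y ≠ c) :
    HammingGraph y c := by
  rw [ham_iff] at hab hac hya
  obtain ⟨i, hi, hABi⟩ := hab
  obtain ⟨j, hj, hACj⟩ := hac
  obtain ⟨k, hk, hYAk⟩ := hya
  have hji : j = i := by
    by_contra hji
    refine not_ham (a := b) (b := c) (i := i) (j := j) ?_ ?_ (fun h => hji h.symm) hbc
    · rw [← hACj i fun h => hji h.symm]
      exact fun h => hi h.symm
    · rw [← hABi j hji]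
      exact hj
  subst hji
  have hki : k = j := by
    by_contra hki
    refine not_ham (a := y) (b := b) (i := k) (j := j) ?_ ?_ hki hyb
    · rw [← hABi k hki]
      exact hk
    · rw [hYAk j fun h => hki h.symm]
      exact hi
  subst hki
  refine ham_of_agreesOff (i := k) (fun m hm => ?_) hne
  rw [hYAk m hm, hACj m hm]

lemma two_coords {a b c : ℕ → ℕ} {i j : ℕ}
    (h1 : AgreesOff a c i) (h2 : AgreesOff b c j)
    (hnab : ¬ HammingGraph a b) (hne : a ≠ b) :
    i ≠ j ∧ a i ≠ b i := by
  have hij : i ≠ j := by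
    rintro rfl
    exact hnab (ham_of_agreesOff (i := i)
      (fun m hm => (h1 m hm).trans (h2 m hm).symm) hne)
  refine ⟨hij, fun habi => ?_⟩
  refine hnab (ham_of_agreesOff (i := j) (fun m hm => ?_) hne)
  by_cases hmi : m = i
  · rwa [hmi]
  · exact (h1 m hmi).trans (h2 m hm).symm

/-- There is no induced `K_{2,3}` in the Hamming graph with both sides independent. -/
lemma no_k23 {a b c d e : ℕ → ℕ}
    (hnab : ¬ HammingGraph a b) (hab : a ≠ b)
    (hncd : ¬ HammingGraph c d) (hnce : ¬ HammingGraph c e) (hnde : ¬ HammingGraph d e)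
    (hcd : c ≠ d) (hce : c ≠ e) (hde : d ≠ e)
    (hac : HammingGraph a c) (had : HammingGraph a d) (hae : HammingGraph a e)
    (hbc : HammingGraph b c) (hbd : HammingGraph b d) (hbe : HammingGraph b e) :
    False := by
  rw [ham_iff] at hac had hae hbc hbd hbe
  obtain ⟨i1, _, hACi⟩ := hac
  obtain ⟨i2, _, hADi⟩ := had
  obtain ⟨i3, _, hAEi⟩ := hae
  obtain ⟨j1, _, hBCj⟩ := hbc
  obtain ⟨j2, _, hBDj⟩ := hbd
  obtain ⟨j3, _, hBEj⟩ := hbe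
  -- the coordinates on the `a` side are pairwise distinct
  have hdist : ∀ {p q : ℕ → ℕ} {u : ℕ}, AgreesOff a p u → AgreesOff a q u →
      ¬ HammingGraph p q → p ≠ q → False := by
    intro p q u h1 h2 hn hne
    exact hn (ham_of_agreesOff (i := u)
      (fun m hm => ((h1 m hm).symm.trans (h2 m hm))) hne)
  have h12 : i1 ≠ i2 := fun h => hdist hACi (h ▸ hADi) hncd hcd
  have h13 : i1 ≠ i3 := fun h => hdist hACi (h ▸ hAEi) hnce hce
  have h23 : i2 ≠ i3 := fun h => hdist hADi (h ▸ hAEi) hnde hde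
  -- via each of `c, d, e`, the pair `a, b` differs at exactly the two listed coordinates
  obtain ⟨hij1, habi1⟩ := two_coords hACi hBCj hnab hab
  obtain ⟨_, habi2⟩ := two_coords hADi hBDj hnab hab
  obtain ⟨_, habi3⟩ := two_coords hAEi hBEj hnab hab
  -- but `a` and `b` agree off `{i1, j1}`
  have hmem : ∀ u : ℕ, a u ≠ b u → u = i1 ∨ u = j1 := by
    intro u hu
    by_contra h
    push_neg at h
    exact hu ((hACi u h.1).trans (hBCj u h.2).symm)
  have hi2 : i2 = j1 := (hmem i2 habi2).resolve_left (Ne.symm h12)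
  have hi3 : i3 = j1 := (hmem i3 habi3).resolve_left (Ne.symm h13)
  exact h23 (hi2.trans hi3.symm)

theorem hamming_noetherian : GraphNoetherian HammingGraph := by
  constructor
  · -- no variation of the half graph
    rintro ⟨x, y, b₀, b₁, hxinj, hyinj, hxy, hxx, hyy, hcross⟩
    cases b₀ with
    | true =>
      have hc : ∀ n m, n ≠ m → HammingGraph (x n) (x m) :=
        fun n m h => (hxx n m h).mpr rfl
      have h1 : HammingGraph (y 0) (x 1) := ham_symm ((hcross 1 0).mpr (by norm_num))
      have h2 : HammingGraph (y 0) (x 2) := ham_symm ((hcross 2 0).mpr (by norm_num))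
      have h0 := clique_absorb (hc 1 2 (by norm_num)) (hc 1 0 (by norm_num))
        (hc 2 0 (by norm_num)) h1 h2 (fun h => hxy 0 0 h.symm)
      exact absurd ((hcross 0 0).mp (ham_symm h0)) (lt_irrefl 0)
    | false =>
      cases b₁ with
      | true =>
        have hc : ∀ n m, n ≠ m → HammingGraph (y n) (y m) :=
          fun n m h => (hyy n m h).mpr rfl
        have h1 : HammingGraph (x 2) (y 0) := (hcross 2 0).mpr (by norm_num)
        have h2 : HammingGraph (x 2) (y 1) := (hcross 2 1).mpr (by norm_num)
        have h0 := clique_absorb (hc 0 1 (by norm_num)) (hc 0 2 (by norm_num))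
          (hc 1 2 (by norm_num)) h1 h2 (hxy 2 2)
        exact absurd ((hcross 2 2).mp h0) (lt_irrefl 2)
      | false =>
        have hnx : ∀ n m : ℕ, n ≠ m → ¬ HammingGraph (x n) (x m) :=
          fun n m h hg => absurd ((hxx n m h).mp hg) Bool.false_ne_true
        have hny : ∀ n m : ℕ, n ≠ m → ¬ HammingGraph (y n) (y m) :=
          fun n m h hg => absurd ((hyy n m h).mp hg) Bool.false_ne_true
        exact no_k23 (hnx 3 4 (by norm_num))
          (fun h => absurd (hxinj h) (by norm_num))
          (hny 0 1 (by norm_num)) (hny 0 2 (by norm_num)) (hny 1 2 (by norm_num))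
          (fun h => absurd (hyinj h) (by norm_num))
          (fun h => absurd (hyinj h) (by norm_num))
          (fun h => absurd (hyinj h) (by norm_num))
          ((hcross 3 0).mpr (by norm_num)) ((hcross 3 1).mpr (by norm_num))
          ((hcross 3 2).mpr (by norm_num)) ((hcross 4 0).mpr (by norm_num))
          ((hcross 4 1).mpr (by norm_num)) ((hcross 4 2).mpr (by norm_num))
  · -- no variation of the three-quarter graph
    rintro ⟨x, y, b₀, b₁, hxinj, hyinj, hxy, hxx, hyy, hcross⟩
    cases b₀ with
    | true =>
      have hc : ∀ n m, n ≠ m → HammingGraph (x n) (x m) :=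
        fun n m h => (hxx n m h).mpr rfl
      have h1 : HammingGraph (y 0) (x 1) := ham_symm ((hcross 1 0).mpr (by norm_num))
      have h2 : HammingGraph (y 0) (x 2) := ham_symm ((hcross 2 0).mpr (by norm_num))
      have h0 := clique_absorb (hc 1 2 (by norm_num)) (hc 1 0 (by norm_num))
        (hc 2 0 (by norm_num)) h1 h2 (fun h => hxy 0 0 h.symm)
      exact absurd ((hcross 0 0).mp (ham_symm h0)) (by norm_num)
    | false =>
      cases b₁ with
      | true =>
        have hc : ∀ n m, n ≠ m → HammingGraph (y n) (y m) :=
          fun n m h => (hyy n m h).mpr rfl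
        have h1 : HammingGraph (x 0) (y 1) := (hcross 0 1).mpr (by norm_num)
        have h2 : HammingGraph (x 0) (y 2) := (hcross 0 2).mpr (by norm_num)
        have h0 := clique_absorb (hc 1 2 (by norm_num)) (hc 1 0 (by norm_num))
          (hc 2 0 (by norm_num)) h1 h2 (hxy 0 0)
        exact absurd ((hcross 0 0).mp h0) (by norm_num)
      | false =>
        have hnx : ∀ n m : ℕ, n ≠ m → ¬ HammingGraph (x n) (x m) :=
          fun n m h hg => absurd ((hxx n m h).mp hg) Bool.false_ne_true
        have hny : ∀ n m : ℕ, n ≠ m → ¬ HammingGraph (y n) (y m) :=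
          fun n m h hg => absurd ((hyy n m h).mp hg) Bool.false_ne_true
        exact no_k23 (hnx 0 1 (by norm_num))
          (fun h => absurd (hxinj h) (by norm_num))
          (hny 2 3 (by norm_num)) (hny 2 4 (by norm_num)) (hny 3 4 (by norm_num))
          (fun h => absurd (hyinj h) (by norm_num))
          (fun h => absurd (hyinj h) (by norm_num))
          (fun h => absurd (hyinj h) (by norm_num))
          ((hcross 0 2).mpr (by norm_num)) ((hcross 0 3).mpr (by norm_num))
          ((hcross 0 4).mpr (by norm_num)) ((hcross 1 2).mpr (by norm_num))
          ((hcross 1 3).mpr (by norm_num)) ((hcross 1 4).mpr (by norm_num))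
end

section
/- Let {ε_{n,m} : n, m ∈ ℕ} be pairwise distinct positive rationals whose sum (over all pairs) is finite, and define h : ℕ^ℕ → ℝ by h(x) = Σ_n ε_{n, x(n)}. Then h is a graph homomorphism from the infinite-breadth Hamming graph to the Vitali equivalence relation: whenever x, y ∈ ℕ^ℕ differ in exactly one coordinate, h(x) ≠ h(y) and h(x) − h(y) is rational. -/
/-! The sums `h x` and `h y` share every term except the one at the coordinate `n₀` where `x`
and `y` differ, so `h x - h y = ε n₀ (x n₀) - ε n₀ (y n₀)`: a rational number, nonzero because
`ε` is injective. -/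

theorem Summable.comp_graph {α β G : Type*} [UniformSpace G] [AddCommGroup G]
    [IsUniformAddGroup G] [CompleteSpace G] {f : α → β → G}
    (hf : Summable fun p : α × β => f p.1 p.2) (x : α → β) :
    Summable fun a => f a (x a) :=
  hf.comp_injective (i := fun a => (a, x a)) fun _ _ hab => congrArg Prod.fst hab

theorem tsum_sub_tsum_eq_sub_of_eq_of_ne {α G : Type*} [AddCommGroup G] [TopologicalSpace G]
    [IsTopologicalAddGroup G] [T2Space G] {f g : α → G} (hf : Summable f) (hg : Summable g)
    {a₀ : α} (hfg : ∀ a ≠ a₀, f a = g a) :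
    ∑' a, f a - ∑' a, g a = f a₀ - g a₀ := by
  rw [← hf.tsum_sub hg, tsum_eq_single a₀ fun a ha => sub_eq_zero.2 (hfg a ha)]

theorem hamming_to_vitali_homomorphism_general
    (ε : ℕ → ℕ → ℚ)
    (hinj : ∀ n m n' m', ε n m = ε n' m' → n = n' ∧ m = m')
    (hsum : Summable (fun p : ℕ × ℕ => ((ε p.1 p.2 : ℝ))))
    (h : (ℕ → ℕ) → ℝ)
    (hh : ∀ x : ℕ → ℕ, h x = ∑' n, ((ε n (x n) : ℝ))) :
    ∀ x y : ℕ → ℕ, (∃! n, x n ≠ y n) →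
      h x ≠ h y ∧ ∃ q : ℚ, h x - h y = (q : ℝ) := by
  rintro x y ⟨n₀, hne, huniq⟩
  have hdiff : h x - h y = ((ε n₀ (x n₀) - ε n₀ (y n₀) : ℚ) : ℝ) := by
    rw [hh, hh, Rat.cast_sub]
    have hrow := Summable.comp_graph (f := fun n m => (ε n m : ℝ)) hsum
    refine tsum_sub_tsum_eq_sub_of_eq_of_ne (hrow x) (hrow y) fun n hn => ?_
    rw [show x n = y n from by_contra fun hxn => hn (huniq n hxn)]
  refine ⟨fun hxy => hne (hinj n₀ _ n₀ _ ?_).2, _, hdiff⟩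
  rwa [hxy, sub_self, eq_comm, Rat.cast_eq_zero, sub_eq_zero] at hdiff

theorem hamming_to_vitali_homomorphism
    (ε : ℕ → ℕ → ℚ)
    (hpos : ∀ n m, 0 < ε n m)
    (hinj : ∀ n m n' m', ε n m = ε n' m' → n = n' ∧ m = m')
    (hsum : Summable (fun p : ℕ × ℕ => ((ε p.1 p.2 : ℝ))))
    (h : (ℕ → ℕ) → ℝ)
    (hh : ∀ x : ℕ → ℕ, h x = ∑' n, ((ε n (x n) : ℝ))) :
    ∀ x y : ℕ → ℕ, (∃! n, x n ≠ y n) →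
      h x ≠ h y ∧ ∃ q : ℚ, h x - h y = (q : ℝ) :=
  hamming_to_vitali_homomorphism_general ε hinj hsum h hh
end

section
/- If there exists a Vitali set A ⊆ ℝ (a set meeting each Vitali equivalence class in exactly one point), then the chromatic number of the infinite-breadth Hamming graph ℍ_ω is countable: there is a function c : ℕ^ℕ → ℚ such that any two points differing in exactly one coordinate receive distinct colors. -/
noncomputable section

private def eps (n m : ℕ) : ℚ := (1/2) ^ (Nat.pair n m + 1)

private lemma eps_inj {n a b : ℕ} (h : a ≠ b) : eps n a ≠ eps n b := by
  have key : ∀ {p q : ℕ}, p < q → ((1:ℚ)/2) ^ q < (1/2) ^ p := fun hpq =>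
    pow_lt_pow_right_of_lt_one₀ (by norm_num) (by norm_num) hpq
  have hp : Nat.pair n a ≠ Nat.pair n b := fun he =>
    h (Nat.pair_eq_pair.mp he).2
  rcases lt_or_gt_of_ne hp with hlt | hlt
  · exact ne_of_gt (key (by omega))
  · exact ne_of_lt (key (by omega))

private lemma eps_nonneg (n m : ℕ) : (0:ℝ) ≤ (eps n m : ℝ) := by
  have : (0:ℚ) ≤ eps n m := by unfold eps; positivity
  exact_mod_cast this

private lemma eps_summable (x : ℕ → ℕ) :
    Summable fun n => ((eps n (x n) : ℝ)) := by
  have hle : ∀ n, ((eps n (x n) : ℝ)) ≤ ((1:ℝ)/2) ^ n := by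
    intro n
    have h1 : ((eps n (x n) : ℝ)) = ((1:ℝ)/2) ^ (Nat.pair n (x n) + 1) := by
      simp [eps]
    rw [h1]
    exact pow_le_pow_of_le_one (by norm_num) (by norm_num)
      (by have := Nat.left_le_pair n (x n); omega)
  exact Summable.of_nonneg_of_le (fun n => eps_nonneg n (x n)) hle summable_geometric_two

private def H (x : ℕ → ℕ) : ℝ := ∑' n, ((eps n (x n) : ℝ))

private lemma H_diff {x y : ℕ → ℕ} {n0 : ℕ} (hxy : ∀ n, n ≠ n0 → x n = y n) :
    H x - H y = ((eps n0 (x n0) : ℝ)) - ((eps n0 (y n0) : ℝ)) := by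
  have hs : H x - H y = ∑' n, (((eps n (x n) : ℝ)) - ((eps n (y n) : ℝ))) :=
    (Summable.tsum_sub (eps_summable x) (eps_summable y)).symm
  rw [hs]
  exact tsum_eq_single n0 (fun n hn => by rw [hxy n hn, sub_self])

end

theorem vitali_set_gives_countable_chromatic_of_hamming
    (A : Set ℝ)
    (hA : ∀ r : ℝ, ∃! s : ℝ, s ∈ A ∧ ∃ q : ℚ, r - s = (q : ℝ)) :
    ∃ c : (ℕ → ℕ) → ℚ, ∀ x y : ℕ → ℕ, (∃! n, x n ≠ y n) → c x ≠ c y := by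
  classical
  choose S hS hSu using hA
  obtain ⟨hSA, hSq⟩ : (∀ r, S r ∈ A) ∧ ∀ r, ∃ q : ℚ, r - S r = (q : ℝ) :=
    ⟨fun r => (hS r).1, fun r => (hS r).2⟩
  choose Q hQ using hSq
  refine ⟨fun x => Q (H x), fun x y ⟨n0, hne, huniq⟩ hc => ?_⟩
  have hagree : ∀ n, n ≠ n0 → x n = y n := by
    intro n hn
    by_contra h
    exact hn (huniq n h)
  have hd : H x - H y = ((eps n0 (x n0) : ℝ)) - ((eps n0 (y n0) : ℝ)) := H_diff hagree
  have hdne : H x - H y ≠ 0 := by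
    rw [hd, sub_ne_zero]
    exact_mod_cast eps_inj hne
  -- S (H x) = S (H y)
  have hSe : S (H y) = S (H x) := by
    apply hSu (H x)
    refine ⟨hSA _, ⟨eps n0 (x n0) - eps n0 (y n0) + Q (H y), ?_⟩⟩
    push_cast
    rw [← hd, ← hQ (H y)]
    ring
  apply hdne
  have h1 : H x - S (H x) = ((Q (H x) : ℝ)) := hQ _
  have h2 : H y - S (H y) = ((Q (H y) : ℝ)) := hQ _
  rw [hSe] at h2
  have : H x - H y = ((Q (H x) : ℝ)) - ((Q (H y) : ℝ)) := by
    rw [← h1, ← h2]; ring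
  simp only at hc
  rw [this, hc, sub_self]
end

section
/- Let Γ be a Noetherian graph on a set X. Then there is no sequence ⟨a_n : n ∈ ℕ⟩ of finite subsets of X such that the sets Γ(a_n) = ⋂_{x ∈ a_n} Γ(x) strictly decrease with n, where Γ(x) = {y : y = x or y Γ x}. -/
private lemma pigeon_infinite {κ : Type*} [Finite κ] {S : Set ℕ} (hS : S.Infinite)
    (f : ℕ → κ) : ∃ c, {n | n ∈ S ∧ f n = c}.Infinite := by
  have : Infinite S := hS.to_subtype
  obtain ⟨c, hc⟩ := Finite.exists_infinite_fiber (fun n : S => f n)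
  refine ⟨c, ?_⟩
  have : Infinite ((fun n : S => f n) ⁻¹' {c}) := hc
  exact Set.infinite_of_injective_forall_mem
    (f := fun p : ((fun n : S => f n) ⁻¹' {c}) => (p.1 : ℕ))
    (fun p q h => Subtype.ext (Subtype.ext h))
    (fun p => ⟨p.1.2, p.2⟩)

private lemma ramsey_pairs {κ : Type*} [Finite κ] (f : ℕ → ℕ → κ) :
    ∃ (g : ℕ → ℕ) (co : κ), StrictMono g ∧ ∀ i j, i < j → f (g i) (g j) = co := by
  classical
  have step : ∀ S : Set ℕ, S.Infinite → ∃ T : Set ℕ, T.Infinite ∧ T ⊆ S ∧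
      (∀ m ∈ T, sInf S < m) ∧ ∃ co, ∀ m ∈ T, f (sInf S) m = co := by
    intro S hS
    have h1 : {m | m ∈ S ∧ sInf S < m}.Infinite := by
      have he : {m | m ∈ S ∧ sInf S < m} = S \ {m | m ≤ sInf S} := by
        ext m; simp [Set.mem_diff, not_le]
      rw [he]
      exact hS.diff (Set.finite_le_nat _)
    obtain ⟨co, hco⟩ := pigeon_infinite h1 (f (sInf S))
    exact ⟨_, hco, fun m hm => hm.1.1, fun m hm => hm.1.2, co, fun m hm => hm.2⟩
  choose T hTinf hTsub hTgt co hco using step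
  let F : ℕ → {S : Set ℕ // S.Infinite} := fun k =>
    Nat.rec ⟨Set.univ, Set.infinite_univ⟩ (fun _ S => ⟨T S.1 S.2, hTinf S.1 S.2⟩) k
  have hFsucc : ∀ k, (F (k + 1)).1 = T (F k).1 (F k).2 := fun k => rfl
  set n : ℕ → ℕ := fun k => sInf (F k).1 with hn
  have hFsub : ∀ k l, k ≤ l → (F l).1 ⊆ (F k).1 := by
    intro k l hkl
    induction l, hkl using Nat.le_induction with
    | base => exact subset_rfl
    | succ l hkl ih =>
      refine subset_trans ?_ ih
      rw [hFsucc]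
      exact hTsub _ _
  have hnmem : ∀ k, n k ∈ (F k).1 := fun k => Nat.sInf_mem ((F k).2.nonempty)
  have hmemsucc : ∀ k l, k < l → n l ∈ T (F k).1 (F k).2 := by
    intro k l hkl
    rw [← hFsucc]
    exact hFsub (k + 1) l hkl (hnmem l)
  have hmono : StrictMono n := by
    apply strictMono_nat_of_lt_succ
    intro k
    exact hTgt _ _ _ (hmemsucc k (k + 1) (Nat.lt_succ_self k))
  have hconst : ∀ k l, k < l → f (n k) (n l) = co (F k).1 (F k).2 :=
    fun k l hkl => hco _ _ _ (hmemsucc k l hkl)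
  set h : ℕ → κ := fun k => co (F k).1 (F k).2 with hh
  obtain ⟨c, hc⟩ := pigeon_infinite (Set.infinite_univ (α := ℕ)) h
  set p : ℕ → Prop := fun k => k ∈ Set.univ ∧ h k = c with hp
  have hpinf : (setOf p).Infinite := hc
  refine ⟨fun i => n (Nat.nth p i), c, hmono.comp (Nat.nth_strictMono hpinf), ?_⟩
  intro i j hij
  rw [hconst _ _ (Nat.nth_strictMono hpinf hij)]
  exact (Nat.nth_mem_of_infinite hpinf i).2

/-- `Γ(x)`: the closed neighborhood of `x`. -/
def nbhd {X : Type*} (Γ : X → X → Prop) (x : X) : Set X := {y | y = x ∨ Γ x y}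

/-- `Γ(a) = ⋂_{x ∈ a} Γ(x)` for a finite set `a`. -/
def nbhdF {X : Type*} (Γ : X → X → Prop) (a : Finset X) : Set X := ⋂ x ∈ a, nbhd Γ x

private lemma nbhdF_anti {X : Type*} (Γ : X → X → Prop) {s t : Finset X} (hst : s ⊆ t) :
    nbhdF Γ t ⊆ nbhdF Γ s := fun y hy =>
  Set.mem_iInter₂.2 fun x hx => Set.mem_iInter₂.1 hy x (hst hx)

theorem noetherian_no_strictly_decreasing
    {X : Type*} (Γ : X → X → Prop) (hsym : Symmetric Γ)
    (hnoeth : GraphNoetherian Γ) :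
    ¬ ∃ a : ℕ → Finset X, ∀ n, nbhdF Γ (a (n + 1)) ⊂ nbhdF Γ (a n) := by
  classical
  rintro ⟨a, ha⟩
  -- replace `a` by an increasing sequence with the same neighborhoods
  set A : ℕ → Finset X := fun n => (Finset.range (n + 1)).biUnion a with hAdef
  have hanti : ∀ k l, k ≤ l → nbhdF Γ (a l) ⊆ nbhdF Γ (a k) := by
    intro k l hkl
    induction l, hkl using Nat.le_induction with
    | base => exact subset_rfl
    | succ l hkl ih => exact subset_trans (ha l).subset ih
  have hAmono : ∀ m l, m ≤ l → A m ⊆ A l := by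
    intro m l hml
    exact Finset.biUnion_subset_biUnion_of_subset_left _
      (Finset.range_subset_range.2 (Nat.succ_le_succ hml))
  have hAeq : ∀ l, nbhdF Γ (A l) = nbhdF Γ (a l) := by
    intro l
    apply Set.Subset.antisymm
    · exact nbhdF_anti Γ (fun z hz =>
        Finset.mem_biUnion.2 ⟨l, Finset.mem_range.2 (Nat.lt_succ_self l), hz⟩)
    · intro y hy
      refine Set.mem_iInter₂.2 fun z hz => ?_
      obtain ⟨k, hk, hzk⟩ := Finset.mem_biUnion.1 hz
      exact Set.mem_iInter₂.1 (hanti k l (Nat.lt_succ_iff.1 (Finset.mem_range.1 hk)) hy) z hzk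
  have hA : ∀ l, nbhdF Γ (A (l + 1)) ⊂ nbhdF Γ (A l) := by
    intro l; rw [hAeq, hAeq]; exact ha l
  have hAanti : ∀ m l, m ≤ l → nbhdF Γ (A l) ⊆ nbhdF Γ (A m) :=
    fun m l hml => nbhdF_anti Γ (hAmono m l hml)
  -- pick witnesses
  have hex : ∀ l, ∃ z, z ∈ nbhdF Γ (A l) ∧ z ∉ nbhdF Γ (A (l + 1)) := by
    intro l
    obtain ⟨z, hz1, hz2⟩ := Set.exists_of_ssubset (hA l)
    exact ⟨z, hz1, hz2⟩
  choose c hc1 hc2 using hex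
  have hex2 : ∀ l, ∃ z ∈ A (l + 1), c l ∉ nbhd Γ z := by
    intro l
    by_contra hcon
    push_neg at hcon
    exact hc2 l (Set.mem_iInter₂.2 hcon)
  choose x hx1 hx2 using hex2
  -- key facts
  have hF1 : ∀ m l, m < l → c l ∈ nbhd Γ (x m) := by
    intro m l hml
    exact Set.mem_iInter₂.1 (hc1 l) (x m) (hAmono (m + 1) l hml (hx1 m))
  have hcinj : Function.Injective c := by
    intro m l hml
    by_contra hne
    rcases Nat.lt_or_ge m l with h | h
    · exact hc2 m (hml ▸ hAanti (m + 1) l h (hc1 l))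
    · have h' : l < m := lt_of_le_of_ne h (Ne.symm hne)
      exact hc2 l (hml ▸ hAanti (l + 1) m h' (hc1 m))
  have hxinj : Function.Injective x := by
    intro m l hml
    by_contra hne
    rcases Nat.lt_or_ge m l with h | h
    · exact hx2 l (hml ▸ hF1 m l h)
    · have h' : l < m := lt_of_le_of_ne h (Ne.symm hne)
      exact hx2 m (hml.symm ▸ hF1 l m h')
  -- Ramsey
  set f : ℕ → ℕ → Bool × Bool × Bool × Bool × Bool := fun i j =>
    (decide (Γ (x i) (x j)), decide (Γ (c i) (c j)), decide (Γ (x j) (c i)),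
      decide (x i = c j), decide (x j = c i)) with hf
  obtain ⟨g, ⟨b1, b2, b3, e1, e2⟩, hg, hcol⟩ := ramsey_pairs f
  have h1 : ∀ i j, i < j → (Γ (x (g i)) (x (g j)) ↔ b1 = true) := by
    intro i j hij
    have := hcol i j hij
    simp only [hf, Prod.mk.injEq] at this
    rw [← this.1, decide_eq_true_eq]
  have h2 : ∀ i j, i < j → (Γ (c (g i)) (c (g j)) ↔ b2 = true) := by
    intro i j hij
    have := hcol i j hij
    simp only [hf, Prod.mk.injEq] at this
    rw [← this.2.1, decide_eq_true_eq]
  have h3 : ∀ i j, i < j → (Γ (x (g j)) (c (g i)) ↔ b3 = true) := by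
    intro i j hij
    have := hcol i j hij
    simp only [hf, Prod.mk.injEq] at this
    rw [← this.2.2.1, decide_eq_true_eq]
  have h4 : ∀ i j, i < j → ((x (g i) = c (g j)) ↔ e1 = true) := by
    intro i j hij
    have := hcol i j hij
    simp only [hf, Prod.mk.injEq] at this
    rw [← this.2.2.2.1, decide_eq_true_eq]
  have h5 : ∀ i j, i < j → ((x (g j) = c (g i)) ↔ e2 = true) := by
    intro i j hij
    have := hcol i j hij
    simp only [hf, Prod.mk.injEq] at this
    rw [← this.2.2.2.2, decide_eq_true_eq]
  have he1 : e1 = false := by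
    cases he : e1
    · rfl
    · exfalso
      have q1 : x (g 0) = c (g 1) := (h4 0 1 one_pos).2 he
      have q2 : x (g 0) = c (g 2) := (h4 0 2 two_pos).2 he
      exact absurd (hg.injective (hcinj (q1 ▸ q2))) (by norm_num)
  have he2 : e2 = false := by
    cases he : e2
    · rfl
    · exfalso
      have q1 : x (g 1) = c (g 0) := (h5 0 1 one_pos).2 he
      have q2 : x (g 2) = c (g 0) := (h5 0 2 two_pos).2 he
      exact absurd (hg.injective (hxinj (q1.trans q2.symm))) (by norm_num)
  have hdiag : ∀ i, c (g i) ≠ x (g i) ∧ ¬ Γ (x (g i)) (c (g i)) := by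
    intro i
    have := hx2 (g i)
    simp only [nbhd, Set.mem_setOf_eq, not_or] at this
    exact this
  have hne : ∀ i j, x (g i) ≠ c (g j) := by
    intro i j
    rcases lt_trichotomy i j with h | h | h
    · intro heq; exact absurd ((h4 i j h).1 heq) (by simp [he1])
    · subst h; exact fun heq => (hdiag i).1 heq.symm
    · intro heq; exact absurd ((h5 j i h).1 heq) (by simp [he2])
  have hcross : ∀ i j, i < j → Γ (x (g i)) (c (g j)) := by
    intro i j hij
    have := hF1 (g i) (g j) (hg hij)
    simp only [nbhd, Set.mem_setOf_eq] at this
    rcases this with h | h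
    · exact absurd h.symm (hne i j)
    · exact h
  have hsymm_iff : ∀ u v : X, Γ u v ↔ Γ v u := fun u v => ⟨fun h => hsym h, fun h => hsym h⟩
  -- the two cases
  cases hb3 : b3
  · -- half graph
    apply hnoeth.1
    refine ⟨fun i => c (g i), fun i => x (g i), b2, b1,
      hcinj.comp hg.injective, hxinj.comp hg.injective,
      fun i j => fun heq => hne j i heq.symm, ?_, ?_, ?_⟩
    · intro i j hij
      rcases Nat.lt_or_ge i j with h | h
      · exact h2 i j h
      · rw [hsymm_iff]; exact h2 j i (lt_of_le_of_ne h (Ne.symm hij))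
    · intro i j hij
      rcases Nat.lt_or_ge i j with h | h
      · exact h1 i j h
      · rw [hsymm_iff]; exact h1 j i (lt_of_le_of_ne h (Ne.symm hij))
    · intro i j
      rw [hsymm_iff]
      constructor
      · intro hΓ
        rcases lt_trichotomy j i with h | h | h
        · exact h
        · exact absurd hΓ (h ▸ (hdiag j).2)
        · exact absurd ((h3 i j h).1 hΓ) (by simp [hb3])
      · exact fun h => hcross j i h
  · -- three-quarter graph
    apply hnoeth.2
    refine ⟨fun i => x (g i), fun i => c (g i), b1, b2,
      hxinj.comp hg.injective, hcinj.comp hg.injective,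
      fun i j => hne i j, ?_, ?_, ?_⟩
    · intro i j hij
      rcases Nat.lt_or_ge i j with h | h
      · exact h1 i j h
      · rw [hsymm_iff]; exact h1 j i (lt_of_le_of_ne h (Ne.symm hij))
    · intro i j hij
      rcases Nat.lt_or_ge i j with h | h
      · exact h2 i j h
      · rw [hsymm_iff]; exact h2 j i (lt_of_le_of_ne h (Ne.symm hij))
    · intro i j
      constructor
      · intro hΓ heq
        exact absurd hΓ (heq ▸ (hdiag i).2)
      · intro hji
        rcases lt_trichotomy i j with h | h | h
        · exact hcross i j h
        · exact absurd h.symm hji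
        · exact (h3 j i h).2 hb3
end

section
/- Let Γ be a graph on a set X such that there is no sequence ⟨a_n : n ∈ ℕ⟩ of finite subsets of X with the sets Γ(a_n) strictly decreasing. Then the collection T of all finite unions of sets of the form Γ(a), for a ⊆ X finite, contains no infinite strictly decreasing sequence of sets under inclusion. -/
namespace FUaux

open Classical

variable {X : Type*} (Γ : X → X → Prop)

/-- `u` is a finite union of basic sets `nbhdF Γ a`. -/
def isFU (u : Set X) : Prop := ∃ F : Finset (Finset X), u = ⋃ a ∈ F, nbhdF Γ a

/-- No strictly decreasing sequence of FU sets inside `s`. -/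
def Noeth (s : Set X) : Prop :=
  ¬ ∃ g : ℕ → Set X, (∀ n, isFU Γ (g n)) ∧ (∀ n, g n ⊆ s) ∧ ∀ n, g (n + 1) ⊂ g n

variable {Γ}

lemma nbhdF_union (a b : Finset X) :
    nbhdF Γ (a ∪ b) = nbhdF Γ a ∩ nbhdF Γ b := by
  classical
  simp only [nbhdF]
  exact Finset.set_biInter_inter a b _

lemma isFU_empty : isFU Γ (∅ : Set X) := ⟨∅, by simp⟩

lemma isFU_basic (a : Finset X) : isFU Γ (nbhdF Γ a) := ⟨{a}, by simp⟩

lemma isFU.union {u v : Set X} (hu : isFU Γ u) (hv : isFU Γ v) : isFU Γ (u ∪ v) := by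
  classical
  obtain ⟨F, rfl⟩ := hu
  obtain ⟨G, rfl⟩ := hv
  exact ⟨F ∪ G, by rw [Finset.set_biUnion_union]⟩

lemma isFU.inter {u v : Set X} (hu : isFU Γ u) (hv : isFU Γ v) : isFU Γ (u ∩ v) := by
  classical
  obtain ⟨F, rfl⟩ := hu
  obtain ⟨G, rfl⟩ := hv
  refine ⟨(F ×ˢ G).image fun p => p.1 ∪ p.2, ?_⟩
  ext x
  simp only [Set.mem_inter_iff, Set.mem_iUnion, Finset.mem_image, Finset.mem_product,
    exists_prop, Prod.exists]
  constructor
  · rintro ⟨⟨a, ha, hxa⟩, ⟨b, hb, hxb⟩⟩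
    exact ⟨a ∪ b, ⟨a, b, ⟨ha, hb⟩, rfl⟩, by rw [nbhdF_union]; exact ⟨hxa, hxb⟩⟩
  · rintro ⟨c, ⟨a, b, ⟨ha, hb⟩, rfl⟩, hx⟩
    rw [nbhdF_union] at hx
    exact ⟨⟨a, ha, hx.1⟩, ⟨b, hb, hx.2⟩⟩

lemma Noeth_empty : Noeth Γ (∅ : Set X) := by
  rintro ⟨g, -, hsub, hlt⟩
  have h := (hlt 0).trans_le (hsub 0)
  exact h.2 (Set.empty_subset _)

lemma Noeth_mono {s t : Set X} (h : s ⊆ t) (ht : Noeth Γ t) : Noeth Γ s := by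
  rintro ⟨g, hFU, hsub, hlt⟩
  exact ht ⟨g, hFU, fun n => (hsub n).trans h, hlt⟩

/-- key union lemma -/
lemma Noeth.union {s t : Set X} (hs : isFU Γ s) (ht : isFU Γ t)
    (Ns : Noeth Γ s) (Nt : Noeth Γ t) : Noeth Γ (s ∪ t) := by
  rintro ⟨g, hFU, hsub, hlt⟩
  -- traces
  set Ts : ℕ → Set X := fun n => g n ∩ s with hTs
  set Tt : ℕ → Set X := fun n => g n ∩ t with hTt
  have gmono : ∀ n, g (n + 1) ⊆ g n := fun n => (hlt n).subset
  have hTsanti : ∀ {m n : ℕ}, m ≤ n → Ts n ⊆ Ts m := fun {m n} h =>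
    Set.inter_subset_inter_left _ ((antitone_nat_of_succ_le gmono) h)
  have hTtanti : ∀ {m n : ℕ}, m ≤ n → Tt n ⊆ Tt m := fun {m n} h =>
    Set.inter_subset_inter_left _ ((antitone_nat_of_succ_le gmono) h)
  -- drop sets
  have extract : ∀ (T : ℕ → Set X) (u : Set X), isFU Γ u → Noeth Γ u →
      (∀ n, T n = g n ∩ u) → (∀ {m n : ℕ}, m ≤ n → T n ⊆ T m) →
      {n | T (n + 1) ⊂ T n}.Finite := by
    intro T u hu Nu hT hanti
    by_contra hinf
    set p : ℕ → Prop := fun n => T (n + 1) ⊂ T n with hp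
    have hinf' : (setOf p).Infinite := hinf
    have hmem : ∀ k, p (Nat.nth p k) := fun k => Nat.nth_mem_of_infinite hinf' k
    refine Nu ⟨fun k => T (Nat.nth p k), ?_, ?_, ?_⟩
    · intro k; show isFU Γ (T (Nat.nth p k)); rw [hT]; exact (hFU _).inter hu
    · intro k; show T (Nat.nth p k) ⊆ u; rw [hT]; exact Set.inter_subset_right
    · intro k
      have h1 : Nat.nth p k < Nat.nth p (k + 1) := (Nat.nth_lt_nth hinf').2 (Nat.lt_succ_self k)
      calc T (Nat.nth p (k + 1)) ⊆ T (Nat.nth p k + 1) := hanti h1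
        _ ⊂ T (Nat.nth p k) := hmem k
  have hsfin := extract Ts s hs Ns (fun _ => rfl) (fun {m n} h => hTsanti h)
  have htfin := extract Tt t ht Nt (fun _ => rfl) (fun {m n} h => hTtanti h)
  -- get a common bound
  obtain ⟨N, hN⟩ := (hsfin.union htfin).bddAbove
  -- beyond the bound, traces are constant
  have hconst : ∀ (T : ℕ → Set X), (∀ {m n : ℕ}, m ≤ n → T n ⊆ T m) →
      (∀ n, N < n → ¬ (T (n + 1) ⊂ T n)) → T (N + 2) = T (N + 1) := by
    intro T hanti hnd
    exact ((hanti (Nat.le_succ _)).antisymm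
      (by
        by_contra hne
        exact hnd (N + 1) (Nat.lt_succ_self N) ⟨hanti (Nat.le_succ _),
          fun h => hne h⟩)).symm ▸ rfl
  have hsc : Ts (N + 2) = Ts (N + 1) := by
    refine hconst Ts (fun {m n} h => hTsanti h) ?_
    intro n hn hlt'
    exact absurd (hN (Set.mem_union_left _ hlt')) (not_le.2 hn)
  have htc : Tt (N + 2) = Tt (N + 1) := by
    refine hconst Tt (fun {m n} h => hTtanti h) ?_
    intro n hn hlt'
    exact absurd (hN (Set.mem_union_right _ hlt')) (not_le.2 hn)
  have hdecomp : ∀ n, g n = Ts n ∪ Tt n := by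
    intro n
    rw [hTs, hTt]
    simp only []
    rw [← Set.inter_union_distrib_left]
    exact (Set.inter_eq_left.2 (hsub n)).symm
  have : g (N + 2) = g (N + 1) := by
    rw [hdecomp, hdecomp, hsc, htc]
  exact (hlt (N + 1)).ne this

variable (Γ)

/-- the relation on Finsets -/
def rel (b a : Finset X) : Prop := nbhdF Γ b ⊂ nbhdF Γ a

variable {Γ}

lemma rel_wf (hdec : ¬ ∃ a : ℕ → Finset X, ∀ n, nbhdF Γ (a (n + 1)) ⊂ nbhdF Γ (a n)) :
    WellFounded (rel Γ) := by
  haveI : IsIrrefl (Finset X) (rel Γ) := ⟨fun a h => (ssubset_irrefl _) h⟩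
  haveI : IsTrans (Finset X) (rel Γ) := ⟨fun _ _ _ h1 h2 => h1.trans h2⟩
  haveI : IsStrictOrder (Finset X) (rel Γ) := ⟨⟩
  rw [RelEmbedding.wellFounded_iff_isEmpty]
  constructor
  intro e
  exact hdec ⟨fun n => e n, fun n => e.map_rel_iff.2 (Nat.lt_succ_self n)⟩

lemma Noeth_basic (hdec : ¬ ∃ a : ℕ → Finset X, ∀ n, nbhdF Γ (a (n + 1)) ⊂ nbhdF Γ (a n)) :
    ∀ a : Finset X, Noeth Γ (nbhdF Γ a) := by
  have wf := rel_wf hdec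
  intro a
  induction a using wf.induction with
  | _ a IH =>
    rintro ⟨g, hFU, hsub, hlt⟩
    -- g 1 is strictly below nbhdF Γ a
    have h1 : g 1 ⊂ nbhdF Γ a := (hlt 0).trans_le (hsub 0)
    obtain ⟨G, hG⟩ := hFU 1
    -- each component of g 1 is strictly below nbhdF Γ a; it need not be basic though.
    -- Show Noeth Γ (g 1) by finite-union induction over G.
    have key : ∀ H : Finset (Finset X), (∀ c ∈ H, nbhdF Γ c ⊂ nbhdF Γ a) →
        Noeth Γ (⋃ c ∈ H, nbhdF Γ c) := by
      intro H
      induction H using Finset.induction with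
      | empty => intro _; simpa using (Noeth_empty : Noeth Γ (∅ : Set X))
      | @insert c H hc IH2 =>
        intro hH
        rw [Finset.set_biUnion_insert]
        refine Noeth.union (isFU_basic c) ?_ ?_ ?_
        · exact ⟨H, rfl⟩
        · exact IH c (hH c (Finset.mem_insert_self c H))
        · exact IH2 fun d hd => hH d (Finset.mem_insert_of_mem hd)
    have hcomp : ∀ c ∈ G, nbhdF Γ c ⊂ nbhdF Γ a := by
      intro c hcG
      refine lt_of_le_of_lt ?_ h1
      rw [hG]
      exact Set.subset_biUnion_of_mem hcG
    have Ng1 : Noeth Γ (g 1) := by rw [hG]; exact key G hcomp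
    exact Ng1 ⟨fun n => g (n + 1), fun n => hFU (n + 1),
      fun n => (antitone_nat_of_succ_le fun m => (hlt m).subset) (Nat.one_le_iff_ne_zero.2 (Nat.succ_ne_zero n)),
      fun n => hlt (n + 1)⟩

end FUaux

theorem finite_unions_no_strictly_decreasing
    {X : Type*} (Γ : X → X → Prop)
    (hdec : ¬ ∃ a : ℕ → Finset X, ∀ n, nbhdF Γ (a (n + 1)) ⊂ nbhdF Γ (a n)) :
    ¬ ∃ f : ℕ → Set X,
      (∀ n, ∃ F : Finset (Finset X), f n = ⋃ a ∈ F, nbhdF Γ a) ∧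
      ∀ n, f (n + 1) ⊂ f n := by
  rintro ⟨f, hFU, hlt⟩
  classical
  obtain ⟨F, hF⟩ := hFU 0
  -- f 0 is a finite union of basic sets, each Noetherian
  have key : ∀ H : Finset (Finset X), FUaux.Noeth Γ (⋃ c ∈ H, nbhdF Γ c) := by
    intro H
    induction H using Finset.induction with
    | empty => simpa using (FUaux.Noeth_empty : FUaux.Noeth Γ (∅ : Set X))
    | @insert c H hc IH2 =>
      rw [Finset.set_biUnion_insert]
      exact FUaux.Noeth.union (FUaux.isFU_basic c) ⟨H, rfl⟩ (FUaux.Noeth_basic hdec c) IH2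
  have N0 : FUaux.Noeth Γ (f 0) := by rw [hF]; exact key F
  exact N0 ⟨f, hFU, fun n => (antitone_nat_of_succ_le fun m => (hlt m).subset) (Nat.zero_le n),
    hlt⟩
end

section
/- For a graph Γ on a set X, the following are equivalent: (1) Γ is Noetherian (contains no variation of the half graph or the three-quarter graph as a vertex-induced subgraph); (2) the Γ-topology, the smallest topology on X in which every set Γ(x) = {y : y = x ∨ y Γ x} is closed, is a Noetherian topology. -/
/-- The `Γ`-topology: the smallest topology in which every set `Γ(x)` is closed. -/
def graphTopology {X : Type*} (Γ : X → X → Prop) : TopologicalSpace X :=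
  TopologicalSpace.generateFrom {s | ∃ x : X, s = (nbhd Γ x)ᶜ}

/-!
A closed set of the `Γ`-topology missing a point `a` is covered by finitely many sets `Γ(x)`
missing `a`. So if `f 0 ⊋ f 1 ⊋ ⋯` is a closed chain and `aₙ ∈ fₙ \ fₙ₊₁`, every later `aₘ` lies
in `Γ(x)` for one of finitely many `x` with `aₙ ∉ Γ(x)`; a nonprincipal ultrafilter picks one such
`cₙ` and, doing the work of Ramsey's theorem for pairs, a subsequence on which all adjacency
patterns among the `a`s and `c`s are homogeneous. That subsequence is a variation of the half
graph or of the three-quarter graph. Conversely, the sets `⋂ m < n, Γ(yₘ)` built from such a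
variation form a strictly decreasing closed chain, separated by the `xₙ`.
-/

open Filter Function Set Topology

theorem Filter.exists_seq_forall_lt_of_eventually_eventually {α : Type*} {l : Filter α}
    [l.NeBot] {R : α → α → Prop} (h : ∀ᶠ a in l, ∀ᶠ b in l, R a b) :
    ∃ φ : ℕ → α, ∀ i j, i < j → R (φ i) (φ j) := by
  choose pt hpt using fun S : l.sets => nonempty_of_mem (inter_mem S.2 h)
  let next : l.sets → l.sets := fun S => ⟨S ∩ {b | R (pt S) b}, inter_mem S.2 (hpt S).2⟩
  let S : ℕ → l.sets := fun k => next^[k] ⟨univ, univ_mem⟩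
  have hS : Antitone fun k => (S k : Set α) := antitone_nat_of_succ_le fun k => by
    simp only [S, iterate_succ_apply']
    exact inter_subset_left
  refine ⟨fun k => pt (S k), fun i j hij => ?_⟩
  have h := hS hij (hpt (S j)).1
  simp only [S, iterate_succ_apply'] at h
  exact h.2

theorem Ultrafilter.exists_bool_eventually_eventually_iff {α : Type*} (U : Ultrafilter α)
    (P : α → α → Prop) : ∃ b : Bool, ∀ᶠ a in U, ∀ᶠ a' in U, (P a a' ↔ b = true) := by
  by_cases h : ∀ᶠ a in U, ∀ᶠ a' in U, P a a'
  · exact ⟨true, h.mono fun _ ha => ha.mono fun _ => by simp⟩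
  · refine ⟨false, ?_⟩
    filter_upwards [U.eventually_not.2 h] with a ha
    filter_upwards [U.eventually_not.2 ha] with a' ha'
    simpa using ha'

theorem Symmetric.iff_of_ne_of_forall_lt {α : Type*} {R : α → α → Prop} (hR : Symmetric R)
    {z : ℕ → α} {p : Prop} (h : ∀ n m, n < m → (R (z n) (z m) ↔ p)) :
    ∀ n m, n ≠ m → (R (z n) (z m) ↔ p) := fun n m hnm =>
  hnm.lt_or_gt.elim (h n m) fun hmn =>
    ⟨fun hR' => (h m n hmn).1 (hR hR'), fun hp => hR ((h m n hmn).2 hp)⟩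

section GraphTopology

variable {X : Type*} {Γ : X → X → Prop}

theorem nhds_graphTopology (a : X) :
    @nhds X (graphTopology Γ) a = ⨅ (x : X) (_ : a ∉ nbhd Γ x), 𝓟 (nbhd Γ x)ᶜ := by
  have hsub : {s | a ∈ s ∧ s ∈ {s | ∃ x, s = (nbhd Γ x)ᶜ}} =
      (fun x => (nbhd Γ x)ᶜ) '' {x | a ∉ nbhd Γ x} := by
    ext; aesop
  rw [graphTopology, TopologicalSpace.nhds_generateFrom, hsub, iInf_image]
  rfl

theorem exists_finite_cover_of_isClosed {s : Set X} (hs : IsClosed[graphTopology Γ] s) {a : X}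
    (ha : a ∉ s) :
    ∃ I : Set X, I.Finite ∧ (∀ x ∈ I, a ∉ nbhd Γ x) ∧ s ⊆ ⋃ x ∈ I, nbhd Γ x := by
  let := graphTopology Γ
  have hs' : sᶜ ∈ 𝓝 a := hs.isOpen_compl.mem_nhds ha
  rw [nhds_graphTopology, mem_biInf_principal] at hs'
  obtain ⟨I, hI, hIa, hIs⟩ := hs'
  refine ⟨I, hI, hIa, ?_⟩
  rw [← compl_subset_compl, compl_iUnion₂]
  exact hIs

theorem isClosed_nbhd (x : X) : IsClosed[graphTopology Γ] (nbhd Γ x) := by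
  let := graphTopology Γ
  exact isOpen_compl_iff.1 (TopologicalSpace.isOpen_generateFrom_of_mem ⟨x, rfl⟩)

theorem VariationEmbedding.exists_closed_ssubset_chain (hsym : Symmetric Γ)
    {cross : ℕ → ℕ → Prop} (h : VariationEmbedding Γ cross) (hlt : ∀ n m, m < n → cross n m)
    (hdiag : ∀ n, ¬ cross n n) :
    ∃ f : ℕ → Set X, (∀ n, IsClosed[graphTopology Γ] (f n)) ∧ ∀ n, f (n + 1) ⊂ f n := by
  obtain ⟨x, y, -, -, -, -, hxy, -, -, hcross⟩ := h
  have hx : ∀ n, ∀ m < n, x n ∈ nbhd Γ (y m) := fun n m hm =>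
    .inr (hsym ((hcross n m).2 (hlt n m hm)))
  have hx' : ∀ n, x n ∉ nbhd Γ (y n) := fun n h =>
    h.elim (hxy n n) fun h => hdiag n ((hcross n n).1 (hsym h))
  let := graphTopology Γ
  refine ⟨fun n => ⋂ m < n, nbhd Γ (y m),
    fun n => isClosed_biInter fun m _ => isClosed_nbhd (y m), fun n => ?_⟩
  refine (ssubset_iff_of_subset (biInter_mono (Iio_subset_Iio n.le_succ) fun _ _ => le_rfl)).2
    ⟨x n, mem_iInter₂.2 (hx n), fun h => hx' n (mem_iInter₂.1 h n n.lt_succ_self)⟩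

theorem variationEmbedding_of_homogeneous (hsym : Symmetric Γ) {x y : ℕ → X}
    {b₀ b₁ b₂ b₃ : Bool} (hx : Injective x) (hdiag : ∀ n, x n ∉ nbhd Γ (y n))
    (hne : ∀ n m, n < m → x m ≠ y n) (hlt : ∀ n m, n < m → Γ (y n) (x m))
    (hxx : ∀ n m, n < m → (Γ (x n) (x m) ↔ b₀ = true))
    (hyy : ∀ n m, n < m → (Γ (y n) (y m) ↔ b₁ = true))
    (hxy : ∀ n m, n < m → (Γ (x n) (y m) ↔ b₂ = true))
    (hxy_eq : ∀ n m, n < m → (x n = y m ↔ b₃ = true)) :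
    VariationEmbedding Γ (fun n m => m < n) ∨ VariationEmbedding Γ (fun n m => m ≠ n) := by
  have hy : Injective y := .of_lt_imp_ne fun n m h h' => hdiag m (.inr (h' ▸ hlt n m h))
  have hxy_lt : ∀ n m, n < m → x n ≠ y m := fun n m h h' => by
    have hb := (hxy_eq n m h).1 h'
    have h₁ := (hxy_eq 0 1 one_pos).2 hb
    have h₂ := (hxy_eq 0 2 two_pos).2 hb
    exact hy.ne (by decide : (1 : ℕ) ≠ 2) (h₁.symm.trans h₂)
  have hxy_ne : ∀ n m, x n ≠ y m := fun n m => by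
    rcases lt_trichotomy n m with h | rfl | h
    exacts [hxy_lt n m h, fun h => hdiag n (.inl h), hne m n h]
  have hcross_gt : ∀ n m, m < n → Γ (x n) (y m) := fun n m h => hsym (hlt m n h)
  have hcross_diag : ∀ n, ¬ Γ (x n) (y n) := fun n h => hdiag n (.inr (hsym h))
  cases b₂
  · refine .inl ⟨x, y, b₀, b₁, hx, hy, hxy_ne, hsym.iff_of_ne_of_forall_lt hxx,
      hsym.iff_of_ne_of_forall_lt hyy, fun n m => ?_⟩
    rcases lt_trichotomy m n with h | rfl | h
    · exact iff_of_true (hcross_gt n m h) h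
    · exact iff_of_false (hcross_diag m) (lt_irrefl m)
    · exact iff_of_false (fun g => Bool.false_ne_true ((hxy n m h).1 g)) h.not_gt
  · refine .inr ⟨x, y, b₀, b₁, hx, hy, hxy_ne, hsym.iff_of_ne_of_forall_lt hxx,
      hsym.iff_of_ne_of_forall_lt hyy, fun n m => ?_⟩
    rcases lt_trichotomy m n with h | rfl | h
    · exact iff_of_true (hcross_gt n m h) h.ne
    · exact iff_of_false (hcross_diag m) (· rfl)
    · exact iff_of_true ((hxy n m h).2 rfl) h.ne'

theorem variationEmbedding_of_finite_covers (hsym : Symmetric Γ) {a : ℕ → X} (ha : Injective a)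
    {I : ℕ → Set X} (hI : ∀ n, (I n).Finite) (hIa : ∀ n, ∀ x ∈ I n, a n ∉ nbhd Γ x)
    (hcover : ∀ n m, n < m → ∃ x ∈ I n, a m ∈ nbhd Γ x) :
    VariationEmbedding Γ (fun n m => m < n) ∨ VariationEmbedding Γ (fun n m => m ≠ n) := by
  let U := hyperfilter ℕ
  have hgt : ∀ n, ∀ᶠ m in U, n < m := fun n =>
    hyperfilter_le_cofinite (Nat.cofinite_eq_atTop ▸ eventually_gt_atTop n)
  choose c hcI hc using fun n =>
    (U.eventually_exists_mem_iff (hI n)).1 ((hgt n).mono (hcover n))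
  have hne : ∀ n, ∀ᶠ m in U, a m ≠ c n := fun n => hyperfilter_le_cofinite <|
    ha.tendsto_cofinite.eventually (finite_singleton (c n)).eventually_cofinite_notMem
  obtain ⟨b₀, h₀⟩ := U.exists_bool_eventually_eventually_iff fun n m => Γ (a n) (a m)
  obtain ⟨b₁, h₁⟩ := U.exists_bool_eventually_eventually_iff fun n m => Γ (c n) (c m)
  obtain ⟨b₂, h₂⟩ := U.exists_bool_eventually_eventually_iff fun n m => Γ (a n) (c m)
  obtain ⟨b₃, h₃⟩ := U.exists_bool_eventually_eventually_iff fun n m => a n = c m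
  obtain ⟨φ, hφ⟩ := exists_seq_forall_lt_of_eventually_eventually (l := U)
    (R := fun n m => n < m ∧ a m ≠ c n ∧ a m ∈ nbhd Γ (c n) ∧ (Γ (a n) (a m) ↔ b₀ = true) ∧
      (Γ (c n) (c m) ↔ b₁ = true) ∧ (Γ (a n) (c m) ↔ b₂ = true) ∧ (a n = c m ↔ b₃ = true)) <| by
    filter_upwards [h₀, h₁, h₂, h₃] with n h₀ h₁ h₂ h₃
    filter_upwards [hgt n, hne n, hc n, h₀, h₁, h₂, h₃] with m hm hne hc h₀ h₁ h₂ h₃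
      using ⟨hm, hne, hc, h₀, h₁, h₂, h₃⟩
  choose hφ_lt hφ_ne hφ_mem hxx hyy hxy hxy_eq using hφ
  have hφ_mono : StrictMono φ := hφ_lt
  exact variationEmbedding_of_homogeneous hsym (x := a ∘ φ) (y := c ∘ φ)
    (ha.comp hφ_mono.injective) (fun n => hIa _ _ (hcI _)) hφ_ne
    (fun n m h => (hφ_mem n m h).resolve_left (hφ_ne n m h)) hxx hyy hxy hxy_eq

theorem variationEmbedding_of_closed_ssubset_chain (hsym : Symmetric Γ) {f : ℕ → Set X}
    (hcl : ∀ n, IsClosed[graphTopology Γ] (f n)) (hch : ∀ n, f (n + 1) ⊂ f n) :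
    VariationEmbedding Γ (fun n m => m < n) ∨ VariationEmbedding Γ (fun n m => m ≠ n) := by
  have hanti : Antitone f := antitone_nat_of_succ_le fun n => (hch n).subset
  choose a haf hanf using fun n => exists_of_ssubset (hch n)
  choose I hI hIa hIf using fun n => exists_finite_cover_of_isClosed (hcl (n + 1)) (hanf n)
  refine variationEmbedding_of_finite_covers hsym ?_ hI hIa fun n m hnm => ?_
  · exact .of_lt_imp_ne fun i j hij heq => hanf i (heq ▸ hanti hij (haf j))
  · simpa using hIf n (hanti hnm (haf m))

end GraphTopology

theorem noetherian_iff_graph_topology_noetherian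
    {X : Type*} (Γ : X → X → Prop) (hsym : Symmetric Γ) :
    GraphNoetherian Γ ↔
      ¬ ∃ f : ℕ → Set X, (∀ n, @IsClosed X (graphTopology Γ) (f n)) ∧
        ∀ n, f (n + 1) ⊂ f n := by
  refine ⟨fun ⟨hhalf, hthree⟩ ⟨f, hcl, hch⟩ => ?_, fun h => ⟨fun he => h ?_, fun he => h ?_⟩⟩
  · exact (variationEmbedding_of_closed_ssubset_chain hsym hcl hch).elim hhalf hthree
  · exact he.exists_closed_ssubset_chain hsym (fun _ _ => id) fun n => lt_irrefl n
  · exact he.exists_closed_ssubset_chain hsym (fun _ _ => ne_of_lt) fun n h => h rfl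
end

section
/- Let Γ be a closed Noetherian graph on a Polish space X and let A ⊆ X be a Γ-good set. If x ∈ X is an accumulation point of a set a ⊆ A of points all Γ-connected to x, then x ∈ A. Consequently, for every x ∈ X \ A there is an open neighborhood O of x containing no element of A that is Γ-connected to x. -/
/-- `♥(a)` for a finite set `a`. -/
def heartF {X : Type*} (Γ : X → X → Prop) (a : Finset X) : Set X :=
  {x | (∀ y ∈ a, x = y ∨ Γ x y) ∧ ∀ z, (∀ y ∈ a, z = y ∨ Γ z y) → (x = z ∨ Γ x z)}

/-- A set is `Γ`-good if it contains `♥(a)` for each of its finite subsets `a`. -/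
def GoodSet {X : Type*} (Γ : X → X → Prop) (A : Set X) : Prop :=
  ∀ a : Finset X, ↑a ⊆ A → heartF Γ a ⊆ A


/-!
Write `N(s) = {w | ∀ u ∈ s, w = u ∨ Γ w u}`. In a Noetherian graph every `a` has a finite `b ⊆ a`
with `N(b) = N(a)`: otherwise one grows finite sets `bₙ ⊆ a` by points `yₙ ∈ a` and finds
`zₙ ∈ N(bₙ)` with `zₙ ≠ yₙ`, `¬ Γ zₙ yₙ`, so that `zₙ` is equal or adjacent to every `yₘ`, `m < n`.
Ramsey's theorem for pairs makes all remaining relations between the `zₙ` and `yₙ` homogeneous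
along a subsequence, which is then a copy of the half graph or of the three-quarter graph.

If `x` is adjacent to every point of `a ⊆ A` and lies in the closure of `a`, then for
`z ∈ N(b) = N(a)` the closed set of points equal or adjacent to `z` contains `a`, hence `x`; so `x ∈ ♥(b) ⊆ A`.
The second statement is the first one for `a = {y ∈ A | Γ x y}`.
-/

open Filter

theorem Filter.exists_strictMono_forall_mem {f : Filter ℕ} [f.NeBot] (hf : f ≤ atTop)
    {S : Set ℕ} (hS : S ∈ f) {T : ℕ → Set ℕ} (hT : ∀ n, T n ∈ f) :
    ∃ g : ℕ → ℕ, StrictMono g ∧ (∀ k, g k ∈ S) ∧ ∀ j k, j < k → g k ∈ T (g j) := by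
  have hnext : ∀ W ∈ f, ∃ n ∈ W, W ∩ T n ∩ Set.Ioi n ∈ f := fun W hW =>
    let ⟨n, hn⟩ := f.nonempty_of_mem hW
    ⟨n, hn, inter_mem (inter_mem hW (hT n)) (hf (Ioi_mem_atTop n))⟩
  choose! next hnextW hnextf using hnext
  set W : ℕ → Set ℕ := fun k => (fun V => V ∩ T (next V) ∩ Set.Ioi (next V))^[k] S
  have hWsucc : ∀ k, W (k + 1) = W k ∩ T (next (W k)) ∩ Set.Ioi (next (W k)) := fun k =>
    Function.iterate_succ_apply' _ k S
  have hWf : ∀ k, W k ∈ f := by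
    intro k
    induction k with
    | zero => exact hS
    | succ k ih => rw [hWsucc]; exact hnextf _ ih
  have hWanti : Antitone W := antitone_nat_of_succ_le fun k => by
    rw [hWsucc]; exact Set.inter_subset_left.trans Set.inter_subset_left
  have hsucc : ∀ j k, j < k → next (W k) ∈ T (next (W j)) ∩ Set.Ioi (next (W j)) := by
    intro j k hjk
    have hk : next (W k) ∈ W (j + 1) := hWanti hjk (hnextW _ (hWf k))
    rw [hWsucc] at hk
    exact ⟨hk.1.2, hk.2⟩
  refine ⟨fun k => next (W k), strictMono_nat_of_lt_succ fun k => (hsucc k _ k.lt_succ_self).2,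
    fun k => hWanti k.zero_le (hnextW _ (hWf k)), fun j k hjk => (hsucc j k hjk).1⟩

theorem Ultrafilter.exists_preimage_singleton_mem {α κ : Type*} [Finite κ] (U : Ultrafilter α)
    (φ : α → κ) : ∃ i, φ ⁻¹' {i} ∈ U := by
  obtain ⟨i, hi⟩ := (U.map φ).eq_pure_of_finite
  exact ⟨i, Ultrafilter.mem_map.1 (hi ▸ rfl : ({i} : Set κ) ∈ U.map φ)⟩

theorem exists_strictMono_homogeneous {κ : Type*} [Finite κ] (c : ℕ → ℕ → κ) :
    ∃ g : ℕ → ℕ, StrictMono g ∧ ∃ i, ∀ j k, j < k → c (g j) (g k) = i := by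
  let U := hyperfilter ℕ
  -- `col n` is the colour of the pairs `(n, m)` for `U`-almost all `m`
  choose col hcol using fun n => U.exists_preimage_singleton_mem (c n)
  obtain ⟨i, hi⟩ := U.exists_preimage_singleton_mem col
  obtain ⟨g, hg, hgS, hgT⟩ := exists_strictMono_forall_mem (f := (U : Filter ℕ))
    (Nat.cofinite_eq_atTop ▸ hyperfilter_le_cofinite) hi hcol
  exact ⟨g, hg, i, fun j k hjk => (hgT j k hjk).trans (hgS j)⟩

section

variable {X : Type*} (Γ : X → X → Prop)

def commonClosedNbhd (s : Set X) : Set X := {w | ∀ u ∈ s, w = u ∨ Γ w u}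

theorem commonClosedNbhd_anti : Antitone (commonClosedNbhd Γ) :=
  fun _ _ hst _ hw u hu => hw u (hst hu)

variable {Γ}

theorem Symmetric.forall_ne_iff_of_forall_lt (hsym : Symmetric Γ) {f : ℕ → X} {p : Prop}
    (h : ∀ j k, j < k → (Γ (f j) (f k) ↔ p)) : ∀ j k, j ≠ k → (Γ (f j) (f k) ↔ p) := by
  intro j k hjk
  rcases hjk.lt_or_gt with hlt | hgt
  · exact h j k hlt
  · exact ⟨fun hΓ => (h k j hgt).1 (hsym hΓ), fun hp => hsym ((h k j hgt).2 hp)⟩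

theorem variationEmbedding_of_triangular_of_homogeneous (hsym : Symmetric Γ) {y z : ℕ → X}
    (hlt : ∀ m n, m < n → z n = y m ∨ Γ (z n) (y m))
    (hdiag : ∀ n, ¬(z n = y n ∨ Γ (z n) (y n)))
    {pz py pzy pe pe' : Prop}
    (hz : ∀ j k, j < k → (Γ (z j) (z k) ↔ pz))
    (hy : ∀ j k, j < k → (Γ (y j) (y k) ↔ py))
    (hzy : ∀ j k, j < k → (Γ (z j) (y k) ↔ pzy))
    (he : ∀ j k, j < k → (z j = y k ↔ pe))
    (he' : ∀ j k, j < k → (z k = y j ↔ pe')) :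
    VariationEmbedding Γ (fun n m => m < n) ∨ VariationEmbedding Γ (fun n m => m ≠ n) := by
  classical
  have hy_ne : ∀ m n, m < n → y m ≠ y n := fun m n hmn h => hdiag n (h ▸ hlt m n hmn)
  have hz_ne : ∀ m n, m < n → z m ≠ z n := fun m n hmn h => hdiag m (h ▸ hlt m n hmn)
  have hpe : ¬pe := fun h => hy_ne 1 2 one_lt_two
    (((he 0 1 one_pos).2 h).symm.trans ((he 0 2 two_pos).2 h))
  have hpe' : ¬pe' := fun h => hy_ne 0 1 one_pos
    (((he' 0 2 two_pos).2 h).symm.trans ((he' 1 2 one_lt_two).2 h))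
  have hzy_ne : ∀ n m, z n ≠ y m := by
    intro n m
    rcases lt_trichotomy n m with h | rfl | h
    · exact fun e => hpe ((he n m h).1 e)
    · exact fun e => hdiag n (Or.inl e)
    · exact fun e => hpe' ((he' m n h).1 e)
  have hcross : ∀ n m, Γ (z n) (y m) ↔ m < n ∨ (n < m ∧ pzy) := by
    intro n m
    rcases lt_trichotomy n m with h | rfl | h
    · simp [hzy n m h, h, h.not_gt]
    · simpa using fun hΓ => hdiag n (Or.inr hΓ)
    · exact iff_of_true ((hlt m n h).resolve_left (hzy_ne n m)) (Or.inl h)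
  have hembed : ∀ cross : ℕ → ℕ → Prop, (∀ n m, Γ (z n) (y m) ↔ cross n m) →
      VariationEmbedding Γ cross := fun cross hc =>
    ⟨z, y, decide pz, decide py, .of_lt_imp_ne hz_ne, .of_lt_imp_ne hy_ne, hzy_ne,
      fun j k hjk => (hsym.forall_ne_iff_of_forall_lt hz j k hjk).trans decide_eq_true_iff.symm,
      fun j k hjk => (hsym.forall_ne_iff_of_forall_lt hy j k hjk).trans decide_eq_true_iff.symm,
      hc⟩
  by_cases hp : pzy
  · exact .inr (hembed _ fun n m => by rw [hcross]; simp only [hp, and_true]; omega)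
  · exact .inl (hembed _ fun n m => by rw [hcross]; simp [hp])

theorem variationEmbedding_of_triangular (hsym : Symmetric Γ) {y z : ℕ → X}
    (hlt : ∀ m n, m < n → z n = y m ∨ Γ (z n) (y m))
    (hdiag : ∀ n, ¬(z n = y n ∨ Γ (z n) (y n))) :
    VariationEmbedding Γ (fun n m => m < n) ∨ VariationEmbedding Γ (fun n m => m ≠ n) := by
  obtain ⟨g, hg, _, hgc⟩ := exists_strictMono_homogeneous
    fun j k => (Γ (z j) (z k), Γ (y j) (y k), Γ (z j) (y k), z j = y k, z k = y j)
  simp only [Prod.ext_iff] at hgc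
  exact variationEmbedding_of_triangular_of_homogeneous hsym (y := y ∘ g) (z := z ∘ g)
    (fun m n h => hlt _ _ (hg h)) (fun n => hdiag _)
    (fun j k h => (hgc j k h).1.to_iff) (fun j k h => (hgc j k h).2.1.to_iff)
    (fun j k h => (hgc j k h).2.2.1.to_iff) (fun j k h => (hgc j k h).2.2.2.1.to_iff)
    (fun j k h => (hgc j k h).2.2.2.2.to_iff)

theorem exists_finset_commonClosedNbhd_eq (hsym : Symmetric Γ) (hnoeth : GraphNoetherian Γ)
    (a : Set X) : ∃ b : Finset X, ↑b ⊆ a ∧ commonClosedNbhd Γ ↑b = commonClosedNbhd Γ a := by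
  classical
  by_contra! hcon
  have hstep : ∀ b : Finset X, ↑b ⊆ a →
      ∃ y ∈ a, ∃ w ∈ commonClosedNbhd Γ ↑b, ¬(w = y ∨ Γ w y) := by
    intro b hb
    have hN : ¬commonClosedNbhd Γ ↑b ⊆ commonClosedNbhd Γ a := fun h =>
      hcon b hb (h.antisymm (commonClosedNbhd_anti Γ hb))
    simp only [Set.not_subset, commonClosedNbhd, Set.mem_ofPred_eq, not_forall] at hN
    obtain ⟨w, hw, y, hy, hwy⟩ := hN
    exact ⟨y, hy, w, hw, hwy⟩
  have : Nonempty X := let ⟨y, _⟩ := hstep ∅ (by simp); ⟨y⟩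
  choose! y hya w hw hwy using hstep
  set b : ℕ → Finset X := fun n => (fun s => insert (y s) s)^[n] ∅
  have hbsucc : ∀ n, b (n + 1) = insert (y (b n)) (b n) := fun n =>
    Function.iterate_succ_apply' _ n ∅
  have hba : ∀ n, ↑(b n) ⊆ a := by
    intro n
    induction n with
    | zero => simp [b]
    | succ n ih => rw [hbsucc, Finset.coe_insert]; exact Set.insert_subset (hya _ ih) ih
  have hbmono : Monotone b := monotone_nat_of_le_succ fun n => by
    rw [hbsucc]; exact Finset.subset_insert _ _
  have hlt : ∀ m n, m < n → w (b n) = y (b m) ∨ Γ (w (b n)) (y (b m)) := fun m n hmn =>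
    hw _ (hba n) _ (hbmono hmn (by rw [hbsucc]; exact Finset.mem_insert_self _ _))
  rcases variationEmbedding_of_triangular hsym hlt (fun n => hwy _ (hba n)) with h | h
  exacts [hnoeth.1 h, hnoeth.2 h]

variable [TopologicalSpace X]

theorem mem_heartF_of_mem_closure (hsym : Symmetric Γ)
    (hclosed : IsClosed {p : X × X | Γ p.1 p.2 ∨ p.1 = p.2}) {a : Set X} {b : Finset X}
    (hb : ↑b ⊆ a) (hN : commonClosedNbhd Γ ↑b = commonClosedNbhd Γ a) {x : X}
    (hxa : ∀ y ∈ a, Γ x y) (hx : x ∈ closure a) : x ∈ heartF Γ b := by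
  refine ⟨fun y hy => .inr (hxa y (hb hy)), fun z hz => ?_⟩
  have hza : z ∈ commonClosedNbhd Γ a := hN ▸ hz
  have hzx : x ∈ {v | Γ z v ∨ z = v} :=
    (hclosed.preimage (Continuous.prodMk_right z)).closure_subset_iff.2
      (fun y hy => (hza y hy).symm) hx
  exact hzx.symm.imp Eq.symm (fun h => hsym h)

theorem GoodSet.mem_of_mem_closure (hsym : Symmetric Γ)
    (hclosed : IsClosed {p : X × X | Γ p.1 p.2 ∨ p.1 = p.2}) (hnoeth : GraphNoetherian Γ)
    {A : Set X} (hA : GoodSet Γ A) {a : Set X} (haA : a ⊆ A) {x : X}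
    (hxa : ∀ y ∈ a, Γ x y) (hx : x ∈ closure a) : x ∈ A := by
  obtain ⟨b, hb, hN⟩ := exists_finset_commonClosedNbhd_eq hsym hnoeth a
  exact hA b (hb.trans haA) (mem_heartF_of_mem_closure hsym hclosed hb hN hxa hx)

end

theorem good_set_closure_general
    {X : Type*} [TopologicalSpace X]
    (Γ : X → X → Prop) (hsym : Symmetric Γ)
    (hclosed : IsClosed {p : X × X | Γ p.1 p.2 ∨ p.1 = p.2})
    (hnoeth : GraphNoetherian Γ)
    (A : Set X) (hA : GoodSet Γ A) :
    (∀ (x : X) (a : Set X), a ⊆ A → (∀ y ∈ a, Γ x y) →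
      AccPt x (Filter.principal a) → x ∈ A) ∧
    ∀ x ∉ A, ∃ O : Set X, IsOpen O ∧ x ∈ O ∧ ∀ y ∈ A, Γ x y → y ∉ O := by
  refine ⟨fun x a haA hxa hacc => hA.mem_of_mem_closure hsym hclosed hnoeth haA hxa
    (mem_closure_iff_clusterPt.2 hacc.clusterPt), fun x hx => ?_⟩
  have hcl : x ∉ closure {y | y ∈ A ∧ Γ x y} := fun h =>
    hx (hA.mem_of_mem_closure hsym hclosed hnoeth (fun y hy => hy.1) (fun y hy => hy.2) h)
  simp only [mem_closure_iff, not_forall] at hcl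
  obtain ⟨O, hO, hxO, hOA⟩ := hcl
  exact ⟨O, hO, hxO, fun y hyA hxy hyO => hOA ⟨y, hyO, hyA, hxy⟩⟩

theorem good_set_closure
    {X : Type*} [TopologicalSpace X] [PolishSpace X]
    (Γ : X → X → Prop) (hsym : Symmetric Γ)
    (hclosed : IsClosed {p : X × X | Γ p.1 p.2 ∨ p.1 = p.2})
    (hnoeth : GraphNoetherian Γ)
    (A : Set X) (hA : GoodSet Γ A) :
    (∀ (x : X) (a : Set X), a ⊆ A → (∀ y ∈ a, Γ x y) →
      AccPt x (Filter.principal a) → x ∈ A) ∧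
    ∀ x ∉ A, ∃ O : Set X, IsOpen O ∧ x ∈ O ∧ ∀ y ∈ A, Γ x y → y ∉ O :=
  good_set_closure_general Γ hsym hclosed hnoeth A hA
end

section
/- Let a ⊆ ℝ be a bounded countable set of positive reals with 0 as its only accumulation point, and let Γ be the graph on a Euclidean space ℝ^n connecting two points iff their Euclidean distance belongs to a. Then Γ contains no infinite clique. -/
open RealInnerProductSpace

/-- From an accumulation-point style hypothesis, extract an injective sequence of points of
`C`, all different from `p`, converging to `p`. -/
lemma exists_good_seq {E : Type*} [MetricSpace E] {C : Set E} {p : E}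
    (key : ∀ ε : ℝ, 0 < ε → ∃ y, y ∈ C ∧ y ≠ p ∧ dist y p < ε) :
    ∃ x : ℕ → E, (∀ m, x m ∈ C) ∧ (∀ m, x m ≠ p) ∧ Function.Injective x ∧
      (∀ ε : ℝ, 0 < ε → ∃ N, ∀ m, N ≤ m → dist (x m) p < ε) := by
  choose f hfC hfne hfd using key
  let g : ℕ → {y : E // y ∈ C ∧ y ≠ p} := fun m =>
    Nat.rec ⟨f 1 one_pos, hfC 1 one_pos, hfne 1 one_pos⟩
      (fun m prev =>
        let ε := min (dist prev.1 p) (1 / (m + 2) : ℝ)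
        have hpos : 0 < ε := lt_min (dist_pos.mpr prev.2.2) (by positivity)
        ⟨f ε hpos, hfC ε hpos, hfne ε hpos⟩) m
  refine ⟨fun m => (g m).1, fun m => (g m).2.1, fun m => (g m).2.2, ?_, ?_⟩
  · have hstep : ∀ m, dist (g (m + 1)).1 p < min (dist (g m).1 p) (1 / (m + 2) : ℝ) :=
      fun m => hfd _ _
    have hanti : StrictAnti (fun m => dist (g m).1 p) :=
      strictAnti_nat_of_succ_lt fun m => lt_of_lt_of_le (hstep m) (min_le_left _ _)
    intro i j h
    exact hanti.injective (by simp only [h])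
  · have hstep : ∀ m, dist (g (m + 1)).1 p < min (dist (g m).1 p) (1 / (m + 2) : ℝ) :=
      fun m => hfd _ _
    have hanti : StrictAnti (fun m => dist (g m).1 p) :=
      strictAnti_nat_of_succ_lt fun m => lt_of_lt_of_le (hstep m) (min_le_left _ _)
    intro ε hε
    obtain ⟨N, hN⟩ := exists_nat_gt (1 / ε)
    refine ⟨N + 1, fun m hm => ?_⟩
    have h1 : dist (g m).1 p ≤ dist (g (N + 1)).1 p := hanti.antitone hm
    have h2 : dist (g (N + 1)).1 p < 1 / ((N : ℝ) + 2) :=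
      lt_of_lt_of_le (hstep N) (min_le_right _ _)
    have h3 : (1 : ℝ) / ((N : ℝ) + 2) < ε := by
      rw [div_lt_iff₀ (by positivity)]
      rw [div_lt_iff₀ hε] at hN
      nlinarith [hε]
    linarith

set_option maxHeartbeats 1000000 in
theorem distance_graph_no_infinite_clique
    (n : ℕ) (a : Set ℝ) (hc : a.Countable)
    (hbdd : BddAbove a) (hpos : ∀ r ∈ a, 0 < r)
    (hacc : ∀ r : ℝ, AccPt r (Filter.principal a) → r = 0) :
    ¬ ∃ C : Set (EuclideanSpace ℝ (Fin n)), C.Infinite ∧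
      ∀ x ∈ C, ∀ y ∈ C, x ≠ y → dist x y ∈ a := by
  rintro ⟨C, hCinf, hclq⟩
  obtain ⟨x0, hx0⟩ := hCinf.nonempty
  obtain ⟨M, hM⟩ := hbdd
  -- C is bounded
  have hCsub : C ⊆ Metric.closedBall x0 (max M 0) := by
    intro y hy
    rcases eq_or_ne y x0 with rfl | hne
    · simp [Metric.mem_closedBall]
    · have hda := hclq y hy x0 hx0 hne
      have := hM hda
      simp only [Metric.mem_closedBall]
      exact le_trans this (le_max_left _ _)
  -- accumulation point of C
  obtain ⟨p, -, hpacc⟩ := hCinf.exists_accPt_of_subset_isCompact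
    (isCompact_closedBall x0 (max M 0)) hCsub
  have key : ∀ ε : ℝ, 0 < ε → ∃ y, y ∈ C ∧ y ≠ p ∧ dist y p < ε := by
    intro ε hε
    rw [accPt_iff_nhds] at hpacc
    obtain ⟨y, ⟨hyU, hyC⟩, hyne⟩ := hpacc (Metric.ball p ε) (Metric.ball_mem_nhds _ hε)
    exact ⟨y, hyC, hyne, by simpa [Metric.mem_ball] using hyU⟩
  obtain ⟨x, hxC, hxp, hinj, hconv⟩ := exists_good_seq key
  -- eventually distances to x k stabilize
  have hEq : ∀ k, ∃ N, ∀ m, N ≤ m → dist (x m) (x k) = dist p (x k) := by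
    intro k
    by_contra h
    push_neg at h
    have ht : (0 : ℝ) < dist p (x k) := dist_pos.mpr (Ne.symm (hxp k))
    have hA : AccPt (dist p (x k)) (Filter.principal a) := by
      rw [accPt_iff_nhds]
      intro U hU
      obtain ⟨ε, hε, hball⟩ := Metric.mem_nhds_iff.mp hU
      obtain ⟨N, hN⟩ := hconv ε hε
      obtain ⟨m, hm, hmne⟩ := h (max N (k + 1))
      have hmk : m ≠ k := by
        have := le_trans (le_max_right N (k + 1)) hm
        omega
      have hda : dist (x m) (x k) ∈ a :=
        hclq _ (hxC m) _ (hxC k) (fun he => hmk (hinj he))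
      refine ⟨dist (x m) (x k), ⟨hball ?_, hda⟩, hmne⟩
      rw [Metric.mem_ball, Real.dist_eq]
      have hle : |dist (x m) (x k) - dist p (x k)| ≤ dist (x m) p :=
        abs_dist_sub_le (x m) p (x k)
      exact lt_of_le_of_lt hle (hN m (le_trans (le_max_left _ _) hm))
    exact absurd (hacc _ hA) (ne_of_gt ht)
  choose N hN using hEq
  -- key orthogonality
  have hinner : ∀ k m, N k ≤ m → N 0 ≤ m → ⟪x m - p, x k - x 0⟫ = 0 := by
    intro k m h1 h2
    have e1 : dist (x m) (x k) = dist p (x k) := hN k m h1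
    have e2 : dist (x m) (x 0) = dist p (x 0) := hN 0 m h2
    have f1 : ‖x m - x k‖ ^ 2 = ‖p - x k‖ ^ 2 := by
      rw [← dist_eq_norm, ← dist_eq_norm, e1]
    have f2 : ‖x m - x 0‖ ^ 2 = ‖p - x 0‖ ^ 2 := by
      rw [← dist_eq_norm, ← dist_eq_norm, e2]
    rw [norm_sub_sq_real, norm_sub_sq_real] at f1 f2
    simp only [inner_sub_left, inner_sub_right]
    linarith
  -- chain of spans stabilizes
  let W : ℕ →o Submodule ℝ (EuclideanSpace ℝ (Fin n)) :=
    ⟨fun m => Submodule.span ℝ ((fun k => x k - x 0) '' Set.Iic m), by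
      intro i j hij
      exact Submodule.span_mono (Set.image_mono (Set.Iic_subset_Iic.mpr hij))⟩
  obtain ⟨m0, hm0⟩ := monotone_stabilizes_iff_noetherian.mpr inferInstance W
  have hWall : ∀ k, x k - x 0 ∈ W m0 := by
    intro k
    have h1 : x k - x 0 ∈ W (max k m0) :=
      Submodule.subset_span ⟨k, Set.mem_Iic.mpr (le_max_left _ _), rfl⟩
    rwa [← hm0 (max k m0) (le_max_right _ _)] at h1
  set Mstar := (Finset.range (m0 + 1)).sup N with hMstar
  have hperp : ∀ m, Mstar ≤ m → ∀ w ∈ W m0, ⟪x m - p, w⟫ = 0 := by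
    intro m hm w hw
    induction hw using Submodule.span_induction with
    | mem v hv =>
      obtain ⟨k, hk, rfl⟩ := hv
      have hNk : N k ≤ m := le_trans (Finset.le_sup (Finset.mem_range.mpr (by
        simpa using Nat.lt_succ_of_le hk))) hm
      have hN0 : N 0 ≤ m := le_trans (Finset.le_sup (Finset.mem_range.mpr (by omega))) hm
      exact hinner k m hNk hN0
    | zero => simp
    | add u v _ _ hu hv => rw [inner_add_right, hu, hv, add_zero]
    | smul c u _ hu => rw [inner_smul_right, hu, mul_zero]
  have hw : x Mstar - x (Mstar + 1) ∈ W m0 := by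
    have := sub_mem (hWall Mstar) (hWall (Mstar + 1))
    simpa using this
  have e1 : ⟪x Mstar - p, x Mstar - x (Mstar + 1)⟫ = 0 := hperp Mstar le_rfl _ hw
  have e2 : ⟪x (Mstar + 1) - p, x Mstar - x (Mstar + 1)⟫ = 0 :=
    hperp (Mstar + 1) (Nat.le_succ _) _ hw
  have hzero : ⟪x Mstar - x (Mstar + 1), x Mstar - x (Mstar + 1)⟫ = 0 := by
    have hrw : x Mstar - x (Mstar + 1) = (x Mstar - p) - (x (Mstar + 1) - p) := by abel
    calc ⟪x Mstar - x (Mstar + 1), x Mstar - x (Mstar + 1)⟫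
        = ⟪(x Mstar - p) - (x (Mstar + 1) - p), x Mstar - x (Mstar + 1)⟫ := by rw [← hrw]
      _ = 0 := by rw [inner_sub_left, e1, e2, sub_zero]
  have h0 : x Mstar - x (Mstar + 1) = 0 := inner_self_eq_zero.mp hzero
  have heq : x Mstar = x (Mstar + 1) := by rwa [sub_eq_zero] at h0
  exact absurd (hinj heq) (by omega)
end

section
/- Let Γ be a closed graph on a set X with no infinite clique, such that the family {Γ(a) : a ⊆ X finite} has no infinite strictly decreasing chain. Then for every infinite set b ⊆ X there is an infinite c ⊆ b such that every element of X is Γ-connected either with only finitely many elements of c or with all elements of c. -/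
theorem refine_to_dichotomy_set
    {X : Type*} (Γ : X → X → Prop) (hsym : Symmetric Γ)
    (hclique : ¬ ∃ C : Set X, C.Infinite ∧ ∀ x ∈ C, ∀ y ∈ C, x ≠ y → Γ x y)
    (hchain : ¬ ∃ a : ℕ → Finset X, ∀ n, nbhdF Γ (a (n + 1)) ⊂ nbhdF Γ (a n)) :
    ∀ b : Set X, b.Infinite → ∃ c ⊆ b, c.Infinite ∧
      ∀ x : X, {y ∈ c | Γ x y}.Finite ∨ ∀ y ∈ c, Γ x y := by
  classical
  intro b hb
  set S : Set (Finset X) := {a | (b ∩ nbhdF Γ a).Infinite} with hSdef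
  have hempty : (∅ : Finset X) ∈ S := by
    simpa [hSdef, nbhdF] using hb
  obtain ⟨a, haS, hmin⟩ : ∃ a ∈ S, ∀ a' ∈ S, ¬ (nbhdF Γ a' ⊂ nbhdF Γ a) := by
    by_contra h
    push_neg at h
    have step : ∀ p : {a // a ∈ S}, ∃ q : {a // a ∈ S},
        nbhdF Γ q.1 ⊂ nbhdF Γ p.1 := by
      rintro ⟨a, ha⟩
      obtain ⟨a', ha', hlt⟩ := h a ha
      exact ⟨⟨a', ha'⟩, hlt⟩
    choose g hg using step
    exact hchain ⟨fun n => (g^[n] ⟨∅, hempty⟩).1, fun n => by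
      show nbhdF Γ (g^[n+1] ⟨∅, hempty⟩).1 ⊂ nbhdF Γ (g^[n] ⟨∅, hempty⟩).1
      rw [Function.iterate_succ']; exact hg _⟩
  set C := nbhdF Γ a with hC
  have hcinf : (b ∩ C).Infinite := haS
  -- key property: if x is connected to infinitely many points of b ∩ C,
  -- then C ⊆ nbhd Γ x
  have key : ∀ x : X, {y ∈ b ∩ C | Γ x y}.Infinite → C ⊆ nbhd Γ x := by
    intro x hx
    have hsub : nbhdF Γ (insert x a) ⊆ C := by
      intro y hy
      rw [nbhdF, Set.mem_iInter₂] at hy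
      rw [hC, nbhdF, Set.mem_iInter₂]
      exact fun z hz => hy z (Finset.mem_insert_of_mem hz)
    have hmem : insert x a ∈ S := by
      refine hx.mono ?_
      rintro y ⟨⟨hyb, hyC⟩, hxy⟩
      refine ⟨hyb, ?_⟩
      rw [nbhdF, Set.mem_iInter₂]
      rintro z hz
      rcases Finset.mem_insert.1 hz with rfl | hz
      · exact Or.inr hxy
      · exact Set.mem_iInter₂.1 hyC z hz
    have hne : nbhdF Γ (insert x a) = C := by
      by_contra hne
      exact hmin _ hmem (hsub.ssubset_of_ne hne)
    intro y hyC
    have : y ∈ nbhdF Γ (insert x a) := hne ▸ hyC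
    rw [nbhdF, Set.mem_iInter₂] at this
    exact this x (Finset.mem_insert_self x a)
  -- the bad set: points of b ∩ C connected to infinitely many points of b ∩ C
  -- but not to themselves; it is a clique, hence finite
  set D : Set X := {x ∈ b ∩ C | {y ∈ b ∩ C | Γ x y}.Infinite ∧ ¬ Γ x x} with hDdef
  have hDfin : D.Finite := by
    by_contra hDinf
    refine hclique ⟨D, hDinf, ?_⟩
    intro x hx y hy hxy
    have hyC : y ∈ C := hy.1.2
    rcases key x hx.2.1 hyC with h | h
    · exact absurd h.symm hxy
    · exact h
  refine ⟨(b ∩ C) \ D, fun y hy => hy.1.1, hcinf.diff hDfin, ?_⟩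
  intro x
  by_cases hfin : {y ∈ (b ∩ C) \ D | Γ x y}.Finite
  · exact Or.inl hfin
  · right
    have hinf' : {y ∈ b ∩ C | Γ x y}.Infinite := by
      have : {y ∈ (b ∩ C) \ D | Γ x y}.Infinite := hfin
      exact this.mono fun y hy => ⟨hy.1.1, hy.2⟩
    intro y hy
    rcases key x hinf' hy.1.2 with rfl | h
    · by_contra hxx
      exact hy.2 ⟨hy.1, hinf', hxx⟩
    · exact h
end

section
/- Let Γ be a graph on a set X containing no clique of cardinality m, and fix a location ⟨a, f⟩: a finite family a of pairwise disjoint sets with a function f : a → ℕ. Then for every k with k → (m)²_{|a|+1} (Ramsey number), any k conditions at the location ⟨a, f⟩ (finite partial Γ-colorings whose domain is a selector of a and whose value on the point in O is f(O)) contain m pairwise compatible ones, whose union is a common extension that is again a partial Γ-coloring. -/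
theorem ramsey_centered_at_location
    {X : Type*} (Γ : X → X → Prop) (hsym : Symmetric Γ) (hirr : ∀ u, ¬ Γ u u)
    (m : ℕ)
    (hclq : ¬ ∃ c : Finset X, c.card = m ∧ ∀ u ∈ c, ∀ v ∈ c, u ≠ v → Γ u v)
    (s : ℕ) (a : Fin s → Set X) (f : Fin s → ℕ)
    (hdisj : ∀ i j, i ≠ j → Disjoint (a i) (a j))
    (hloc : ∀ i j, i ≠ j → f i = f j → ∀ u ∈ a i, ∀ v ∈ a j, ¬ Γ u v)
    (k : ℕ)
    -- `k → (m)²_{s+1}` : every coloring of pairs from `k` with `s+1` colors has a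
    -- homogeneous set of size `m`
    (hRam : ∀ col : Fin k → Fin k → Fin (s + 1),
      ∃ (H : Finset (Fin k)) (v : Fin (s + 1)), H.card = m ∧
        ∀ t ∈ H, ∀ t' ∈ H, t < t' → col t t' = v)
    -- `k` many conditions at the location `⟨a, f⟩`, given by their selectors
    (x : Fin k → Fin s → X) (hsel : ∀ t i, x t i ∈ a i)
    (hcond : ∀ t, ∀ i j, Γ (x t i) (x t j) → f i ≠ f j) :
    ∃ T : Finset (Fin k), T.card = m ∧
      ∀ t ∈ T, ∀ t' ∈ T, ∀ i j, Γ (x t i) (x t' j) → f i ≠ f j := by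
  classical
  -- color a pair by a witness index of incompatibility, or by `last` if compatible
  set col : Fin k → Fin k → Fin (s + 1) := fun t t' =>
    if h : ∃ i : Fin s, Γ (x t i) (x t' i) then (Classical.choose h).castSucc
    else Fin.last s with hcol
  obtain ⟨H, v, hHcard, hHhom⟩ := hRam col
  by_cases hv : v = Fin.last s
  · -- homogeneous in the "compatible" color: H works
    refine ⟨H, hHcard, ?_⟩
    have key : ∀ t ∈ H, ∀ t' ∈ H, t < t' → ∀ i j, Γ (x t i) (x t' j) → f i ≠ f j := by
      intro t ht t' ht' hlt i j hΓ hf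
      by_cases hij : i = j
      · subst hij
        have := hHhom t ht t' ht' hlt
        rw [hcol] at this
        simp only at this
        rw [dif_pos ⟨i, hΓ⟩] at this
        rw [hv] at this
        exact absurd this (by simp [Fin.ext_iff, (Classical.choose _ : Fin s).isLt.ne])
      · exact hloc i j hij hf _ (hsel t i) _ (hsel t' j) hΓ
    intro t ht t' ht' i j hΓ hf
    rcases lt_trichotomy t t' with h | h | h
    · exact key t ht t' ht' h i j hΓ hf
    · subst h; exact hcond t i j hΓ hf
    · exact key t' ht' t ht h j i (hsym hΓ) hf.symm
  · -- homogeneous in an "incompatibility witness" color: get a Γ-clique of size m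
    exfalso
    obtain ⟨i0, rfl⟩ : ∃ i0 : Fin s, v = i0.castSucc := ⟨v.castPred hv, by simp⟩
    have hΓall : ∀ t ∈ H, ∀ t' ∈ H, t < t' → Γ (x t i0) (x t' i0) := by
      intro t ht t' ht' hlt
      have hc := hHhom t ht t' ht' hlt
      rw [hcol] at hc
      simp only at hc
      by_cases h : ∃ i : Fin s, Γ (x t i) (x t' i)
      · rw [dif_pos h] at hc
        have : Classical.choose h = i0 := Fin.castSucc_injective _ hc
        have := Classical.choose_spec h
        rwa [‹Classical.choose h = i0›] at this
      · rw [dif_neg h] at hc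
        exact absurd hc.symm (by simp [Fin.ext_iff, i0.isLt.ne])
    have hne : ∀ t ∈ H, ∀ t' ∈ H, t ≠ t' → x t i0 ≠ x t' i0 := by
      intro t ht t' ht' hne heq
      rcases hne.lt_or_gt with h | h
      · exact hirr _ (heq ▸ hΓall t ht t' ht' h)
      · exact hirr _ (heq.symm ▸ hΓall t' ht' t ht h)
    apply hclq
    refine ⟨H.image (fun t => x t i0), ?_, ?_⟩
    · rw [Finset.card_image_of_injOn, hHcard]
      intro t ht t' ht' heq
      by_contra hne'
      exact hne t ht t' ht' hne' heq
    · rintro u hu v' hv'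
      simp only [Finset.mem_image] at hu hv'
      obtain ⟨t, ht, rfl⟩ := hu
      obtain ⟨t', ht', rfl⟩ := hv'
      intro hneq
      have htt' : t ≠ t' := fun h => hneq (by rw [h])
      rcases htt'.lt_or_gt with h | h
      · exact hΓall t ht t' ht' h
      · exact hsym (hΓall t' ht' t ht h)
end

section
/- The diagonal Hamming graph ℍ_{<ω}, i.e., the restriction of the infinite-breadth Hamming graph to the set ∏_n (n+1) = {x ∈ ℕ^ℕ : ∀n, x(n) ≤ n}, admits a graph homomorphism into the distance graph Γ_{1,a} on ℝ, where a = {m·ε_n : n ∈ ℕ, 1 ≤ m ≤ n} for any sequence ⟨ε_n⟩ of positive reals with Σ_n (n+1)ε_n < ∞ such that all the values m·ε_n (n ∈ ℕ, 1 ≤ m ≤ n) are distinct; namely h(x) = Σ_n x(n)·ε_n maps edges of ℍ_{<ω} to pairs of reals at distance in a. -/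
theorem diagonal_hamming_into_distance_graph
    (ε : ℕ → ℝ) (hpos : ∀ n, 0 < ε n)
    (hsum : Summable (fun n : ℕ => ((n : ℝ) + 1) * ε n))
    (hdist : ∀ n m n' m' : ℕ, 1 ≤ m → m ≤ n → 1 ≤ m' → m' ≤ n' →
      (m : ℝ) * ε n = (m' : ℝ) * ε n' → n = n' ∧ m = m') :
    ∀ x y : ℕ → ℕ, (∀ n, x n ≤ n) → (∀ n, y n ≤ n) → (∃! n, x n ≠ y n) →
      (∑' n, (x n : ℝ) * ε n) ≠ (∑' n, (y n : ℝ) * ε n) ∧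
      |(∑' n, (x n : ℝ) * ε n) - (∑' n, (y n : ℝ) * ε n)| ∈
        {r : ℝ | ∃ n m : ℕ, 1 ≤ m ∧ m ≤ n ∧ r = (m : ℝ) * ε n} := by
  intro x y hx hy hxy
  obtain ⟨n₀, hn₀, huniq⟩ := hxy
  have hsummable : ∀ z : ℕ → ℕ, (∀ n, z n ≤ n) →
      Summable (fun n : ℕ => (z n : ℝ) * ε n) := by
    intro z hz
    refine Summable.of_nonneg_of_le (fun n => ?_) (fun n => ?_) hsum
    · exact mul_nonneg (Nat.cast_nonneg _) (hpos n).le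
    · apply mul_le_mul_of_nonneg_right _ (hpos n).le
      exact_mod_cast le_trans (Nat.cast_le.mpr (hz n)) (by linarith : (n : ℝ) ≤ n + 1)
  have hsx := hsummable x hx
  have hsy := hsummable y hy
  have hdiff : (∑' n, (x n : ℝ) * ε n) - (∑' n, (y n : ℝ) * ε n)
      = ((x n₀ : ℝ) - y n₀) * ε n₀ := by
    rw [← Summable.tsum_sub hsx hsy]
    have : ∀ n, n ≠ n₀ → ((x n : ℝ) * ε n - (y n : ℝ) * ε n) = 0 := by
      intro n hn
      have : x n = y n := by
        by_contra h
        exact hn (huniq n h)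
      rw [this]; ring
    rw [tsum_eq_single n₀ this]
    ring
  have hne : ((x n₀ : ℝ) - y n₀) * ε n₀ ≠ 0 := by
    apply mul_ne_zero _ (hpos n₀).ne'
    intro h
    apply hn₀
    have : (x n₀ : ℝ) = y n₀ := by linarith
    exact_mod_cast this
  constructor
  · intro h
    apply hne
    rw [← hdiff, h, sub_self]
  · rw [hdiff, abs_mul, abs_of_pos (hpos n₀)]
    set m := max (x n₀) (y n₀) - min (x n₀) (y n₀) with hm
    refine ⟨n₀, m, ?_, ?_, ?_⟩
    · have : x n₀ ≠ y n₀ := hn₀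
      omega
    · have := hx n₀; have := hy n₀; omega
    · have hmr : (m : ℝ) = |(x n₀ : ℝ) - y n₀| := by
        rcases le_total (x n₀) (y n₀) with h | h
        · rw [abs_of_nonpos (sub_nonpos.mpr (by exact_mod_cast h))]
          have hm2 : m = y n₀ - x n₀ := by omega
          rw [hm2]; push_cast [h]; ring
        · rw [abs_of_nonneg (sub_nonneg.mpr (by exact_mod_cast h))]
          have hm2 : m = x n₀ - y n₀ := by omega
          rw [hm2]; push_cast [h]; ring
      rw [hmr]
end
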